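/- arXiv:math/0601210 — 4 statements merged into one kernel-verified Lean document; each statement's English description precedes it below -/
import Mathlib

section
/- Let E be a regular (a,b)-module and let δ be any complex number. Then the evaluation map τ : E → Hom_{a,b}(Hom_{a,b}(E, E_δ), E_δ), defined by τ(x)(φ) = φ(x), is an isomorphism of (a,b)-modules: it is a ℂ[[b]]-linear bijection and satisfies τ(a·x) = a·τ(x) for all x ∈ E. -/
open PowerSeries

noncomputable section

/-- The structural axiom for the `a`-endomorphism of an (a,b)-module over `ℂ[[b]]`
(the variable `b` is `PowerSeries.X`): `a` is additive and satisfies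
`a (S • x) = S • a x + (b ^ 2 * S') • x`.  (Additivity together with the second
axiom applied to constants yields `ℂ`-linearity.) -/
def IsAB {E : Type*} [AddCommGroup E] [Module (PowerSeries ℂ) E] (a : E → E) : Prop :=
  (∀ x y, a (x + y) = a x + a y) ∧
  ∀ (S : PowerSeries ℂ) (x : E),
    a (S • x) = S • a x + ((PowerSeries.X : PowerSeries ℂ) ^ 2 * PowerSeries.derivative ℂ S) • x

/-- An (a,b)-module has a simple pole when `a E ⊆ b E`. -/
def SimplePole {E : Type*} [AddCommGroup E] [Module (PowerSeries ℂ) E] (a : E → E) : Prop :=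
  ∀ x, ∃ y, a x = (PowerSeries.X : PowerSeries ℂ) • y

/-- The `a`-action on `Hom_{ℂ[[b]]}(E, F)` : `(a·φ)(x) = a_F (φ x) − φ (a_E x)`. -/
def aHom {E F : Type*} [AddCommGroup E] [Module (PowerSeries ℂ) E]
    [AddCommGroup F] [Module (PowerSeries ℂ) F]
    (aE : E → E) (aF : F → F) (hE : IsAB aE) (hF : IsAB aF)
    (φ : E →ₗ[PowerSeries ℂ] F) : E →ₗ[PowerSeries ℂ] F where
  toFun x := aF (φ x) - φ (aE x)
  map_add' x y := by
    simp only [map_add, hE.1, hF.1]; abel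
  map_smul' S x := by
    simp only [map_smul, hE.2, hF.2, RingHom.id_apply, map_add, map_smul, smul_sub]
    abel

@[simp] lemma aHom_apply {E F : Type*} [AddCommGroup E] [Module (PowerSeries ℂ) E]
    [AddCommGroup F] [Module (PowerSeries ℂ) F]
    (aE : E → E) (aF : F → F) (hE : IsAB aE) (hF : IsAB aF)
    (φ : E →ₗ[PowerSeries ℂ] F) (x : E) :
    aHom aE aF hE hF φ x = aF (φ x) - φ (aE x) := rfl

lemma isAB_aHom {E F : Type*} [AddCommGroup E] [Module (PowerSeries ℂ) E]
    [AddCommGroup F] [Module (PowerSeries ℂ) F]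
    (aE : E → E) (aF : F → F) (hE : IsAB aE) (hF : IsAB aF) :
    IsAB (aHom aE aF hE hF) := by
  constructor
  · intro φ ψ; ext x
    simp only [aHom_apply, LinearMap.add_apply, hF.1]
    abel
  · intro S φ; ext x
    simp only [aHom_apply, LinearMap.add_apply, LinearMap.smul_apply, hF.2, smul_sub]
    abel

/-- The rank-one (a,b)-module `E_δ`, realized on the carrier `ℂ[[b]]` with `e_δ = 1`:
`a (S • e_δ) = δ b S e_δ + b² S' e_δ`. -/
def aDelta (δ : ℂ) : PowerSeries ℂ → PowerSeries ℂ := fun S =>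
  (PowerSeries.C δ * PowerSeries.X) * S +
    (PowerSeries.X : PowerSeries ℂ) ^ 2 * PowerSeries.derivative ℂ S

lemma isAB_aDelta (δ : ℂ) : IsAB (aDelta δ) := by
  constructor
  · intro x y; simp only [aDelta, map_add, mul_add]; ring
  · intro S T
    simp only [aDelta, smul_eq_mul, Derivation.leibniz, smul_eq_mul]
    ring

/-- The ring automorphism `σ` of `ℂ[[b]]` with `σ(b) = -b`. -/
def sigmaAB : PowerSeries ℂ →+* PowerSeries ℂ := PowerSeries.rescale (-1 : ℂ)

/-- `Ě` : same underlying abelian group as `E`, `ℂ[[b]]`-action twisted by `σ`,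
`a` acting as `-a` (see `chkA`). -/
def Chk (E : Type*) : Type _ := E

/-- The identity of the underlying sets, `E → Ě`. -/
def toChk {E : Type*} : E → Chk E := id

/-- The identity of the underlying sets, `Ě → E`. -/
def ofChk {E : Type*} : Chk E → E := id

instance {E : Type*} [AddCommGroup E] : AddCommGroup (Chk E) :=
  inferInstanceAs (AddCommGroup E)

noncomputable instance {E : Type*} [AddCommGroup E] [Module (PowerSeries ℂ) E] :
    Module (PowerSeries ℂ) (Chk E) :=
  Module.compHom E sigmaAB

lemma chk_smul {E : Type*} [AddCommGroup E] [Module (PowerSeries ℂ) E]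
    (S : PowerSeries ℂ) (x : Chk E) :
    S • x = toChk (sigmaAB S • ofChk x) := rfl

@[simp] lemma toChk_ofChk {E : Type*} (x : Chk E) : toChk (ofChk x) = x := rfl
@[simp] lemma ofChk_toChk {E : Type*} (x : E) : ofChk (toChk x) = x := rfl
lemma toChk_add {E : Type*} [AddCommGroup E] (x y : E) :
    toChk (x + y) = toChk x + toChk y := rfl
lemma toChk_neg {E : Type*} [AddCommGroup E] (x : E) : toChk (-x) = -(toChk x) := rfl

/-- The `a`-endomorphism of `Ě`, i.e. `-a`. -/
def chkA {E : Type*} [AddCommGroup E] (aE : E → E) : Chk E → Chk E := fun x => toChk (-(aE (ofChk x)))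

lemma derivative_sigmaAB (S : PowerSeries ℂ) :
    PowerSeries.derivative ℂ (sigmaAB S) = -(sigmaAB (PowerSeries.derivative ℂ S)) := by
  ext n
  simp only [PowerSeries.coeff_derivative, sigmaAB, PowerSeries.coeff_rescale, map_neg,
    PowerSeries.coeff_derivative]
  ring

lemma sigmaAB_X : sigmaAB (PowerSeries.X : PowerSeries ℂ) = -PowerSeries.X := by
  ext n
  simp only [sigmaAB, PowerSeries.coeff_rescale, map_neg, PowerSeries.coeff_X]
  rcases eq_or_ne n 1 with h | h <;> simp [h]

lemma isAB_chkA {E : Type*} [AddCommGroup E] [Module (PowerSeries ℂ) E]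
    (aE : E → E) (hE : IsAB aE) : IsAB (chkA aE) := by
  constructor
  · intro x y
    show -(aE (ofChk x + ofChk y)) = -(aE (ofChk x)) + -(aE (ofChk y))
    rw [hE.1]; abel
  · intro S x
    show -(aE (sigmaAB S • ofChk x)) =
      sigmaAB S • (-(aE (ofChk x))) +
        (sigmaAB ((PowerSeries.X : PowerSeries ℂ) ^ 2 * PowerSeries.derivative ℂ S)) • ofChk x
    rw [hE.2, derivative_sigmaAB, map_mul, map_pow, sigmaAB_X]
    rw [neg_add, smul_neg, mul_neg, neg_smul, neg_neg, neg_pow]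
    simp

/-- A `ℂ[[b]]`-submodule stable under `a` (a sub-(a,b)-module). -/
def IsSubAB {E : Type*} [AddCommGroup E] [Module (PowerSeries ℂ) E]
    (aE : E → E) (G : Submodule (PowerSeries ℂ) E) : Prop :=
  ∀ x ∈ G, aE x ∈ G

/-- `a G ⊆ b G` for a submodule `G`. -/
def SPOn {E : Type*} [AddCommGroup E] [Module (PowerSeries ℂ) E]
    (aE : E → E) (G : Submodule (PowerSeries ℂ) E) : Prop :=
  ∀ x ∈ G, ∃ y ∈ G, aE x = (PowerSeries.X : PowerSeries ℂ) • y

/-- `F` is the biggest simple pole sub-(a,b)-module of `E`. -/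
def IsBiggestSP {E : Type*} [AddCommGroup E] [Module (PowerSeries ℂ) E]
    (aE : E → E) (F : Submodule (PowerSeries ℂ) E) : Prop :=
  IsSubAB aE F ∧ SPOn aE F ∧
    ∀ G : Submodule (PowerSeries ℂ) E, IsSubAB aE G → SPOn aE G → G ≤ F

/-- The restriction of the `a`-endomorphism to a stable submodule. -/
def aRes {E : Type*} [AddCommGroup E] [Module (PowerSeries ℂ) E]
    (aE : E → E) (G : Submodule (PowerSeries ℂ) E) (h : IsSubAB aE G) : G → G :=
  fun x => ⟨aE x, h x x.2⟩

lemma isAB_aRes {E : Type*} [AddCommGroup E] [Module (PowerSeries ℂ) E]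
    (aE : E → E) (hE : IsAB aE) (G : Submodule (PowerSeries ℂ) E) (h : IsSubAB aE G) :
    IsAB (aRes aE G h) := by
  constructor
  · intro x y; apply Subtype.ext; simpa [aRes] using hE.1 x y
  · intro S x; apply Subtype.ext; simpa [aRes] using hE.2 S x

/-- An (a,b)-module is regular when it embeds in a simple pole (a,b)-module. -/
def IsABRegular {E : Type*} [AddCommGroup E] [Module (PowerSeries ℂ) E] (aE : E → E) : Prop :=
  ∃ (G : Type) (_ : AddCommGroup G) (_ : Module (PowerSeries ℂ) G),
    Module.Free (PowerSeries ℂ) G ∧ Module.Finite (PowerSeries ℂ) G ∧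
      ∃ aG : G → G, IsAB aG ∧ SimplePole aG ∧
        ∃ ι : E →ₗ[PowerSeries ℂ] G, Function.Injective ι ∧ ∀ x, ι (aE x) = aG (ι x)

/-- `(Ẽ, ι)` is a saturation of `E` : `Ẽ` has a simple pole, `ι` is an injective
morphism of (a,b)-modules, `b^N Ẽ ⊆ ι(E)` for some `N`, and the only sub-(a,b)-module of
`Ẽ` containing `ι(E)` with a simple pole is `Ẽ` itself. -/
def IsSaturation {E Et : Type*} [AddCommGroup E] [Module (PowerSeries ℂ) E]
    [AddCommGroup Et] [Module (PowerSeries ℂ) Et]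
    (aE : E → E) (aEt : Et → Et) (ι : E →ₗ[PowerSeries ℂ] Et) : Prop :=
  Function.Injective ι ∧ (∀ x, ι (aE x) = aEt (ι x)) ∧ SimplePole aEt ∧
    (∃ N : ℕ, ∀ y : Et, (PowerSeries.X : PowerSeries ℂ) ^ N • y ∈ LinearMap.range ι) ∧
    ∀ G : Submodule (PowerSeries ℂ) Et,
      IsSubAB aEt G → SPOn aEt G → LinearMap.range ι ≤ G → G = ⊤

/-- `b·M` as a submodule of an (a,b)-module `M`. -/
def bSub (M : Type*) [AddCommGroup M] [Module (PowerSeries ℂ) M] :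
    Submodule (PowerSeries ℂ) M :=
  LinearMap.range (LinearMap.lsmul (PowerSeries ℂ) M (PowerSeries.X : PowerSeries ℂ))

theorem stmt2 (E : Type) [AddCommGroup E] [Module (PowerSeries ℂ) E]
    [Module.Free (PowerSeries ℂ) E] [Module.Finite (PowerSeries ℂ) E]
    (aE : E → E) (hE : IsAB aE) (hreg : IsABRegular aE) (δ : ℂ) :
    ∃ τ : E ≃ₗ[PowerSeries ℂ]
        ((E →ₗ[PowerSeries ℂ] PowerSeries ℂ) →ₗ[PowerSeries ℂ] PowerSeries ℂ),
      (∀ (x : E) (φ : E →ₗ[PowerSeries ℂ] PowerSeries ℂ), τ x φ = φ x) ∧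
      ∀ x : E, τ (aE x) =
        aHom (aHom aE (aDelta δ) hE (isAB_aDelta δ)) (aDelta δ)
          (isAB_aHom aE (aDelta δ) hE (isAB_aDelta δ)) (isAB_aDelta δ) (τ x) := by

  refine ⟨Module.evalEquiv (PowerSeries ℂ) E, fun x φ => by
    simp [Module.evalEquiv_apply], fun x => ?_⟩
  refine LinearMap.ext fun φ => ?_
  have h : ∀ (y : E) (ψ : E →ₗ[PowerSeries ℂ] PowerSeries ℂ),
      Module.evalEquiv (PowerSeries ℂ) E y ψ = ψ y := fun y ψ => by
    simp [Module.evalEquiv_apply]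
  simp only [aHom_apply, h, LinearMap.sub_apply]
  rw [sub_sub_cancel]
end
end

section
/- Let E be a regular (a,b)-module, δ a complex number, and assume there is an isomorphism of (a,b)-modules κ : Ě → Hom_{a,b}(E, E_δ). Let F be the biggest simple pole sub-(a,b)-module of E and let (Ẽ, ι) be a saturation of E. Let b_E denote the minimal polynomial of the endomorphism −b⁻¹a of Ẽ/bẼ and let r be its degree, and let b*_E denote the minimal polynomial of the endomorphism −b⁻¹a of F/bF. Then b*_E(z) = (−1)^r · b_E(−δ − z) for all z. -/
open PowerSeries

noncomputable section

/-- Every `ℂ[[b]]`-module is a `ℂ`-vector space via the constants `ℂ ⊆ ℂ[[b]]`. -/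
noncomputable instance (priority := 50) modCofModK (M : Type*) [AddCommGroup M]
    [Module (PowerSeries ℂ) M] : Module ℂ M :=
  Module.compHom M (algebraMap ℂ (PowerSeries ℂ))


/-! ### Auxiliary lemmas -/

namespace ABAux

local notation "R" => PowerSeries ℂ
local notation "Xb" => (PowerSeries.X : PowerSeries ℂ)
local notation "dd" => PowerSeries.derivative ℂ

lemma X_mul_derivative_X_pow (N : ℕ) :
    Xb * dd (Xb ^ N) = (N : R) * Xb ^ N := by
  induction N with
  | zero => simp
  | succ n ih =>
    rw [pow_succ, Derivation.leibniz, smul_eq_mul, smul_eq_mul, PowerSeries.derivative_X]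
    push_cast
    calc Xb * (Xb ^ n * 1 + Xb * dd (Xb ^ n))
        = Xb ^ (n+1) + (Xb * dd (Xb ^ n)) * Xb := by ring
      _ = ((n:R)+1) * Xb ^ (n+1) := by rw [ih]; ring

lemma X_mul_derivative_rep (N : ℕ) (h : R) :
    Xb * dd (Xb ^ N * h) = (N : R) * (Xb ^ N * h) + Xb ^ (N+1) * dd h := by
  rw [Derivation.leibniz, smul_eq_mul, smul_eq_mul, mul_add]
  rw [show Xb * (h * dd (Xb ^ N)) = h * (Xb * dd (Xb ^ N)) by ring,
    X_mul_derivative_X_pow]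
  ring

lemma X_pow_succ_dvd_X_sq_mul_derivative {N : ℕ} {g : R} (hg : Xb ^ N ∣ g) :
    Xb ^ (N+1) ∣ Xb ^ 2 * dd g := by
  obtain ⟨h, rfl⟩ := hg
  have h0 : Xb ^ 2 * dd (Xb ^ N * h) = Xb * (Xb * dd (Xb ^ N * h)) := by ring
  rw [h0, X_mul_derivative_rep, mul_add]
  exact dvd_add ⟨(N : R) * h, by ring⟩ ⟨Xb * dd h, by ring⟩

lemma coeff_N_X_pow_mul (N : ℕ) (h : R) :
    PowerSeries.coeff N (Xb ^ N * h) = PowerSeries.coeff 0 h := by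
  simpa using PowerSeries.coeff_X_pow_mul h N 0

lemma coeff_X_mul_derivative {N : ℕ} {g : R} (hg : Xb ^ N ∣ g) :
    PowerSeries.coeff N (Xb * dd g) = N * PowerSeries.coeff N g := by
  obtain ⟨h, rfl⟩ := hg
  rw [X_mul_derivative_rep, map_add]
  have h1 : ((N : R) * (Xb ^ N * h)) = PowerSeries.C (N:ℂ) * (Xb ^ N * h) := by
    norm_cast
  have h2 : PowerSeries.coeff N (Xb ^ (N+1) * dd h) = 0 :=
    (PowerSeries.X_pow_dvd_iff.mp ⟨_, rfl⟩) N (Nat.lt_succ_self N)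
  rw [h1, h2, add_zero, PowerSeries.coeff_C_mul, coeff_N_X_pow_mul]

lemma X_dvd_cancel {N : ℕ} {t : R} (h : Xb ^ (N+1) ∣ Xb * t) : Xb ^ N ∣ t := by
  obtain ⟨s, hs⟩ := h
  refine ⟨s, mul_left_cancel₀ (PowerSeries.X_ne_zero : Xb ≠ 0) ?_⟩
  rw [hs]; ring

lemma coeff_eq_zero_of_dvd {N : ℕ} {g : R} (h : Xb ^ (N+1) ∣ g) :
    PowerSeries.coeff N g = 0 :=
  (PowerSeries.X_pow_dvd_iff.mp h) N (Nat.lt_succ_self N)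

lemma dvd_succ_of_dvd_of_coeff_zero {N : ℕ} {g : R} (h : Xb ^ N ∣ g)
    (h0 : PowerSeries.coeff N g = 0) : Xb ^ (N+1) ∣ g := by
  rw [PowerSeries.X_pow_dvd_iff] at h ⊢
  intro m hm
  rcases Nat.lt_or_ge m N with h' | h'
  · exact h m h'
  · have : m = N := le_antisymm (Nat.lt_succ_iff.mp hm) h'
    subst this; exact h0

section DualStuff

open Polynomial

variable {V : Type*} [AddCommGroup V] [Module ℂ V]

lemma dualMap_one : (LinearMap.dualMap (1 : V →ₗ[ℂ] V)) = 1 := by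
  ext φ x; rfl

lemma dualMap_pow (f : V →ₗ[ℂ] V) (n : ℕ) :
    LinearMap.dualMap (f ^ n) = (LinearMap.dualMap f) ^ n := by
  induction n with
  | zero => simpa using dualMap_one
  | succ n ih =>
    have : f ^ (n+1) = (f ^ n).comp f := by rw [pow_succ]; rfl
    rw [this, ← LinearMap.dualMap_comp_dualMap, ih, pow_succ']
    rfl

lemma dualMap_add (f g : V →ₗ[ℂ] V) :
    LinearMap.dualMap (f + g) = LinearMap.dualMap f + LinearMap.dualMap g := by
  ext φ x; simp [LinearMap.dualMap_apply, map_add]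

lemma dualMap_smul (c : ℂ) (f : V →ₗ[ℂ] V) :
    LinearMap.dualMap (c • f) = c • LinearMap.dualMap f := by
  ext φ x; simp

lemma aeval_dualMap (f : V →ₗ[ℂ] V) (p : ℂ[X]) :
    Polynomial.aeval (LinearMap.dualMap f) p = LinearMap.dualMap (Polynomial.aeval f p) := by
  rw [Polynomial.aeval_eq_sum_range (p := p) (LinearMap.dualMap f),
    Polynomial.aeval_eq_sum_range (p := p) f]
  induction (Finset.range (p.natDegree + 1)) using Finset.induction with
  | empty => simp only [Finset.sum_empty]; ext φ x; simp
  | insert _ _ hni ih =>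
    rw [Finset.sum_insert hni, Finset.sum_insert hni, dualMap_add, dualMap_smul, dualMap_pow, ih]

lemma dualMap_eq_zero (g : V →ₗ[ℂ] V) (h : LinearMap.dualMap g = 0) : g = 0 := by
  ext x
  rw [LinearMap.zero_apply, ← Module.forall_dual_apply_eq_zero_iff ℂ (g x)]
  intro φ
  have := congrFun (congrArg DFunLike.coe (congrFun (congrArg DFunLike.coe h) φ)) x
  simpa using this

lemma aeval_dualMap_eq_zero_iff (f : V →ₗ[ℂ] V) (p : ℂ[X]) :
    Polynomial.aeval (LinearMap.dualMap f) p = 0 ↔ Polynomial.aeval f p = 0 := by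
  rw [aeval_dualMap]
  constructor
  · exact fun h => dualMap_eq_zero _ h
  · intro h; rw [h]; ext φ x; simp

lemma minpoly_dualMap [FiniteDimensional ℂ V] (f : V →ₗ[ℂ] V) :
    minpoly ℂ (LinearMap.dualMap f) = minpoly ℂ f := by
  have h1 : minpoly ℂ (LinearMap.dualMap f) ∣ minpoly ℂ f :=
    minpoly.dvd ℂ _ ((aeval_dualMap_eq_zero_iff f _).mpr (minpoly.aeval ℂ f))
  have h2 : minpoly ℂ f ∣ minpoly ℂ (LinearMap.dualMap f) :=
    minpoly.dvd ℂ _ ((aeval_dualMap_eq_zero_iff f _).mp (minpoly.aeval ℂ _))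
  exact Polynomial.eq_of_monic_of_associated
    (minpoly.monic (LinearMap.isIntegral _)) (minpoly.monic (LinearMap.isIntegral f))
    (associated_of_dvd_dvd h1 h2)

lemma minpoly_end_subsingleton {W : Type*} [AddCommGroup W] [Module ℂ W] [Subsingleton W]
    (f : W →ₗ[ℂ] W) : minpoly ℂ f = 1 := by
  have h0 : (Polynomial.aeval f) (1 : Polynomial ℂ) = 0 := by
    apply LinearMap.ext; intro x; exact Subsingleton.elim _ _
  have hint : IsIntegral ℂ f := ⟨1, Polynomial.monic_one, h0⟩
  exact (minpoly.monic hint).eq_one_of_isUnit (isUnit_of_dvd_one (minpoly.dvd ℂ f h0))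

/-- affine transform of the minimal polynomial -/
lemma minpoly_smul_one_sub {B : Type*} [Ring B] [Algebra ℂ B] [Nontrivial B]
    (A : B) (hA : IsIntegral ℂ A) (c : ℂ) :
    minpoly ℂ (c • (1 : B) - A)
      = ((-1:ℂ) ^ (minpoly ℂ A).natDegree) •
          ((minpoly ℂ A).comp (Polynomial.C c - Polynomial.X)) := by
  set Q := minpoly ℂ A with hQ
  set r := Q.natDegree with hr
  set L : ℂ[X] := Polynomial.C c - Polynomial.X with hL
  have hLdeg : L.natDegree = 1 := by
    rw [hL, show Polynomial.C c - Polynomial.X = -(Polynomial.X - Polynomial.C c) by ring,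
      natDegree_neg, natDegree_X_sub_C]
  have hLlead : L.leadingCoeff = -1 := by
    rw [hL, show Polynomial.C c - Polynomial.X = -(Polynomial.X - Polynomial.C c) by ring,
      leadingCoeff_neg, (monic_X_sub_C c).leadingCoeff]
  have hQmonic : Q.Monic := minpoly.monic hA
  have hQne : Q ≠ 0 := hQmonic.ne_zero
  have haevalL : ∀ x : B, Polynomial.aeval x L = c • 1 - x := by
    intro x
    rw [hL, map_sub, Polynomial.aeval_C, Polynomial.aeval_X, Algebra.algebraMap_eq_smul_one]
  set P : ℂ[X] := ((-1:ℂ) ^ r) • (Q.comp L) with hP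
  have hcompdeg : (Q.comp L).natDegree = r := by rw [natDegree_comp, hLdeg, mul_one]
  have hcomplead : (Q.comp L).leadingCoeff = (-1:ℂ) ^ r := by
    rw [leadingCoeff_comp (by rw [hLdeg]; norm_num), hQmonic.leadingCoeff, hLlead, one_mul]
  have hPmonic : P.Monic := by
    show ((-1:ℂ) ^ r • (Q.comp L)).Monic
    rw [Polynomial.Monic, Polynomial.smul_eq_C_mul, leadingCoeff_mul' ?h, leadingCoeff_C,
      hcomplead]
    · rw [← mul_pow]; norm_num
    · rw [leadingCoeff_C, hcomplead, ← mul_pow]; norm_num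
  have hPdeg : P.natDegree = r := by
    rw [hP, Polynomial.smul_eq_C_mul,
      Polynomial.natDegree_C_mul (pow_ne_zero _ (by norm_num) : ((-1:ℂ)^r) ≠ 0), hcompdeg]
  have hPaeval : Polynomial.aeval (c • (1:B) - A) P = 0 := by
    rw [hP, map_smul, Polynomial.aeval_comp, haevalL, sub_sub_cancel, hQ, minpoly.aeval,
      smul_zero]
  refine (minpoly.unique ℂ _ hPmonic hPaeval ?_).symm
  intro q hqmonic hqaeval
  have hq'aeval : Polynomial.aeval A (q.comp L) = 0 := by
    rw [Polynomial.aeval_comp, haevalL, hqaeval]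
  have hq'lead : (q.comp L).leadingCoeff ≠ 0 := by
    rw [leadingCoeff_comp (by rw [hLdeg]; norm_num), hqmonic.leadingCoeff, hLlead, one_mul]
    exact pow_ne_zero _ (by norm_num)
  have hq'ne : q.comp L ≠ 0 := fun h => hq'lead (by rw [h, leadingCoeff_zero])
  have hdvd : Q ∣ q.comp L := minpoly.dvd ℂ A hq'aeval
  have hle : r ≤ q.natDegree := by
    have := Polynomial.natDegree_le_of_dvd hdvd hq'ne
    rwa [natDegree_comp, hLdeg, mul_one] at this
  rw [Polynomial.degree_eq_natDegree hPmonic.ne_zero,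
    Polynomial.degree_eq_natDegree hqmonic.ne_zero, hPdeg]
  exact_mod_cast hle

end DualStuff

section ModStuff

lemma sigmaAB_sigmaAB (S : PowerSeries ℂ) : sigmaAB (sigmaAB S) = S := by
  show PowerSeries.rescale (-1:ℂ) (PowerSeries.rescale (-1:ℂ) S) = S
  rw [PowerSeries.rescale_rescale, show ((-1:ℂ) * (-1)) = 1 by norm_num,
    PowerSeries.rescale_one]
  rfl

lemma sigmaAB_C (c : ℂ) : sigmaAB (PowerSeries.C c) = PowerSeries.C c := by
  ext n
  simp only [sigmaAB, PowerSeries.coeff_rescale, PowerSeries.coeff_C]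
  rcases eq_or_ne n 0 with h | h
  · simp [h]
  · simp [h]

variable {M : Type*} [AddCommGroup M] [Module (PowerSeries ℂ) M]

lemma csmul_def (c : ℂ) (x : M) : c • x = (PowerSeries.C c) • x := by
  show (algebraMap ℂ R c) • x = _
  rw [← PowerSeries.C_eq_algebraMap]

lemma csmul_powerSeries (c : ℂ) (g : PowerSeries ℂ) :
    c • g = PowerSeries.C c * g := by
  rw [PowerSeries.C_eq_algebraMap, ← Algebra.smul_def]

lemma mk_csmul (p : Submodule (PowerSeries ℂ) M) (c : ℂ) (x : M) :
    (Submodule.Quotient.mk (c • x) : M ⧸ p) = c • (Submodule.Quotient.mk x : M ⧸ p) := by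
  rw [csmul_def, csmul_def (x := (Submodule.Quotient.mk x : M ⧸ p)), Submodule.Quotient.mk_smul]

lemma Xsmul_injective [Module.Free (PowerSeries ℂ) M] :
    Function.Injective (fun m : M => Xb • m) := by
  intro a b hab
  let B := Module.Free.chooseBasis (PowerSeries ℂ) M
  have h2 : ∀ i, Xb * B.repr a i = Xb * B.repr b i := by
    intro i
    have := congrArg (fun m => B.repr m i) hab
    simpa using this
  apply B.repr.injective
  exact Finsupp.ext fun i => mul_left_cancel₀ PowerSeries.X_ne_zero (h2 i)

lemma mk_smul_eq (S : PowerSeries ℂ) (z : M) :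
    (Submodule.Quotient.mk (S • z) : M ⧸ bSub M)
      = (PowerSeries.constantCoeff S) • (Submodule.Quotient.mk z : M ⧸ bSub M) := by
  set c0 := PowerSeries.constantCoeff S with hc0
  have hdvd : Xb ∣ (S - PowerSeries.C c0) := by
    rw [PowerSeries.X_dvd_iff]; simp [hc0]
  obtain ⟨S₁, hS₁⟩ := hdvd
  have hmem : S • z - (PowerSeries.C c0) • z ∈ bSub M := by
    rw [← sub_smul, hS₁, mul_smul]
    exact ⟨S₁ • z, rfl⟩
  calc (Submodule.Quotient.mk (S • z) : M ⧸ bSub M)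
      = Submodule.Quotient.mk ((PowerSeries.C c0) • z) := (Submodule.Quotient.eq _).mpr hmem
    _ = c0 • Submodule.Quotient.mk z := by rw [← csmul_def, mk_csmul]

/-- lift `y ↦ coeff n (L y)` to the quotient -/
def coeffQuot (p : Submodule (PowerSeries ℂ) M) (n : ℕ) (L : M →ₗ[PowerSeries ℂ] PowerSeries ℂ)
    (hL : ∀ m ∈ p, PowerSeries.coeff n (L m) = 0) : (M ⧸ p) →ₗ[ℂ] ℂ where
  toFun q := Quotient.liftOn' q (fun y => PowerSeries.coeff n (L y)) (by
    intro a b hab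
    have h : a - b ∈ p := by
      rw [← Submodule.Quotient.eq]
      exact Quotient.sound' hab
    have h2 := hL _ h
    rw [map_sub, map_sub] at h2
    exact sub_eq_zero.mp h2)
  map_add' q q' := by
    obtain ⟨a, rfl⟩ := Submodule.Quotient.mk_surjective p q
    obtain ⟨b, rfl⟩ := Submodule.Quotient.mk_surjective p q'
    rw [← Submodule.Quotient.mk_add]
    show PowerSeries.coeff n (L (a + b)) = _
    rw [map_add, map_add]
    rfl
  map_smul' c q := by
    obtain ⟨a, rfl⟩ := Submodule.Quotient.mk_surjective p q
    rw [← mk_csmul]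
    show PowerSeries.coeff n (L (c • a)) = c * PowerSeries.coeff n (L a)
    rw [csmul_def, map_smul, smul_eq_mul, PowerSeries.coeff_C_mul]

@[simp] lemma coeffQuot_mk (p : Submodule (PowerSeries ℂ) M) (n : ℕ)
    (L : M →ₗ[PowerSeries ℂ] PowerSeries ℂ) (hL : ∀ m ∈ p, PowerSeries.coeff n (L m) = 0)
    (y : M) :
    coeffQuot p n L hL (Submodule.Quotient.mk y) = PowerSeries.coeff n (L y) := rfl

lemma finite_quotient_bSub [Module.Finite (PowerSeries ℂ) M] :
    Module.Finite ℂ (M ⧸ bSub M) := by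
  classical
  obtain ⟨s, hs⟩ := Module.finite_def.mp (inferInstance : Module.Finite (PowerSeries ℂ) M)
  refine ⟨⟨Finset.image (fun m => (Submodule.Quotient.mk m : M ⧸ bSub M)) s, ?_⟩⟩
  rw [eq_top_iff]
  rintro q -
  obtain ⟨y, rfl⟩ := Submodule.Quotient.mk_surjective _ q
  have hy : y ∈ Submodule.span (PowerSeries ℂ) ↑s := by rw [hs]; exact Submodule.mem_top
  induction hy using Submodule.span_induction with
  | mem z hz => exact Submodule.subset_span (by simpa using ⟨z, hz, rfl⟩)
  | zero =>
    rw [Submodule.Quotient.mk_zero]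
    exact Submodule.zero_mem _
  | add a b ha hb ha' hb' =>
    rw [Submodule.Quotient.mk_add]
    exact Submodule.add_mem _ ha' hb'
  | smul S z hz hz' =>
    rw [mk_smul_eq]
    exact Submodule.smul_mem _ _ hz' 

lemma mk_sum_csmul {ι : Type*} (p : Submodule (PowerSeries ℂ) M) (s : Finset ι)
    (c : ι → ℂ) (w : ι → M) :
    (Submodule.Quotient.mk (∑ i ∈ s, c i • w i) : M ⧸ p)
      = ∑ i ∈ s, c i • (Submodule.Quotient.mk (w i) : M ⧸ p) := by
  classical
  induction s using Finset.induction with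
  | empty => simp
  | insert _ _ hni ih =>
    rw [Finset.sum_insert hni, Finset.sum_insert hni, Submodule.Quotient.mk_add, mk_csmul, ih]

end ModStuff

end ABAux

set_option maxHeartbeats 2000000
set_option synthInstance.maxHeartbeats 400000

theorem stmt6 (E : Type) [AddCommGroup E] [Module (PowerSeries ℂ) E]
    [Module.Free (PowerSeries ℂ) E] [Module.Finite (PowerSeries ℂ) E]
    (aE : E → E) (hE : IsAB aE) (hreg : IsABRegular aE) (δ : ℂ)
    (κ : Chk E ≃ₗ[PowerSeries ℂ] (E →ₗ[PowerSeries ℂ] PowerSeries ℂ))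
    (hκ : ∀ x : Chk E, κ (chkA aE x) = aHom aE (aDelta δ) hE (isAB_aDelta δ) (κ x))
    (F : Submodule (PowerSeries ℂ) E) (hFbig : IsBiggestSP aE F)
    (Et : Type) [AddCommGroup Et] [Module (PowerSeries ℂ) Et]
    [Module.Free (PowerSeries ℂ) Et] [Module.Finite (PowerSeries ℂ) Et]
    (aEt : Et → Et) (hEt : IsAB aEt)
    (ι : E →ₗ[PowerSeries ℂ] Et) (hsat : IsSaturation aE aEt ι)
    -- the endomorphism `b⁻¹a` of `Ẽ` and the induced endomorphism of `Ẽ/bẼ`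
    (u : Et → Et) (hu : ∀ y : Et, (PowerSeries.X : PowerSeries ℂ) • u y = aEt y)
    (ubar : (Et ⧸ bSub Et) →ₗ[ℂ] (Et ⧸ bSub Et))
    (hubar : ∀ y : Et, ubar (Submodule.Quotient.mk y) = Submodule.Quotient.mk (u y))
    -- the endomorphism `b⁻¹a` of `F` and the induced endomorphism of `F/bF`
    (v : F → F) (hv : ∀ x : F, (PowerSeries.X : PowerSeries ℂ) • v x = aRes aE F hFbig.1 x)
    (vbar : (F ⧸ bSub F) →ₗ[ℂ] (F ⧸ bSub F))
    (hvbar : ∀ x : F, vbar (Submodule.Quotient.mk x) = Submodule.Quotient.mk (v x)) :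
    ∀ z : ℂ, (minpoly ℂ (-vbar)).eval z =
      (-1 : ℂ) ^ (minpoly ℂ (-ubar)).natDegree * (minpoly ℂ (-ubar)).eval (-δ - z) := by
  classical
  obtain ⟨hι, hιa, hspEt, hNex, hmin⟩ := hsat
  obtain ⟨N, hN⟩ := hNex
  choose lam hlam using fun y => LinearMap.mem_range.mp (hN y)
  have toChk_inj : Function.Injective (toChk : E → Chk E) := fun a b h => h
  -- twisted linearity of κ ∘ toChk
  have hK2 : ∀ (S : PowerSeries ℂ) (x : E), κ (toChk (S • x)) = sigmaAB S • κ (toChk x) := by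
    intro S x
    rw [show toChk (S • x) = sigmaAB S • toChk x from by
      rw [chk_smul, ofChk_toChk, ABAux.sigmaAB_sigmaAB], map_smul]
  have hKX : ∀ x : E, κ (toChk ((X : PowerSeries ℂ) • x))
      = -((X : PowerSeries ℂ) • κ (toChk x)) := by
    intro x; rw [hK2, sigmaAB_X]; exact neg_smul (X : PowerSeries ℂ) (κ (toChk x))
  have hKC : ∀ (c : ℂ) (x : E), κ (toChk (c • x)) = (PowerSeries.C c) • κ (toChk x) := by
    intro c x
    rw [ABAux.csmul_def, hK2, ABAux.sigmaAB_C]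
  have hK1 : ∀ x : E, κ (toChk (aE x))
      = -(aHom aE (aDelta δ) hE (isAB_aDelta δ) (κ (toChk x))) := by
    intro x
    have h := hκ (toChk x)
    have h2 : chkA aE (toChk x) = -(toChk (aE x)) := by
      show toChk (-(aE (ofChk (toChk x)))) = _
      rw [ofChk_toChk, toChk_neg]
    rw [h2, map_neg] at h
    rw [← h, neg_neg]
  -- linearity of lam
  have lam_add : ∀ y y', lam (y + y') = lam y + lam y' := fun y y' => hι (by
    rw [map_add, hlam, hlam, hlam, smul_add])
  have lam_smul : ∀ (S : PowerSeries ℂ) y, lam (S • y) = S • lam y := fun S y => hι (by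
    rw [map_smul, hlam, hlam, smul_smul, smul_smul, mul_comm])
  set Lam : Et →ₗ[PowerSeries ℂ] E :=
    { toFun := lam, map_add' := lam_add, map_smul' := lam_smul } with hLamdef
  have hLam : ∀ y, ι (Lam y) = (X : PowerSeries ℂ) ^ N • y := hlam
  have hLamι : ∀ e : E, Lam (ι e) = (X : PowerSeries ℂ) ^ N • e := fun e => hι (by
    rw [hLam, map_smul])
  -- properties of u
  have hXinjEt : Function.Injective (fun m : Et => (X : PowerSeries ℂ) • m) :=
    ABAux.Xsmul_injective
  have hu_smul : ∀ (S : PowerSeries ℂ) (y : Et), u (S • y)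
      = S • u y + ((X : PowerSeries ℂ) * PowerSeries.derivative ℂ S) • y := by
    intro S y
    apply hXinjEt
    show (X : PowerSeries ℂ) • u (S • y) = (X : PowerSeries ℂ) • _
    rw [hu, hEt.2, ← hu y]
    simp only [smul_add, smul_smul]
    congr 1 <;> congr 1 <;> ring
  -- the key identity for a_E on Lam
  have hXsqder : ∀ M : ℕ, (X : PowerSeries ℂ)^2 * PowerSeries.derivative ℂ ((X : PowerSeries ℂ)^M)
      = (M : PowerSeries ℂ) * (X : PowerSeries ℂ)^(M+1) := by
    intro M
    rw [pow_two, mul_assoc, ABAux.X_mul_derivative_X_pow]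
    ring
  have h1 : ∀ y : Et, aE (Lam y) = (X : PowerSeries ℂ) • Lam (u y)
      + ((N : PowerSeries ℂ) * (X : PowerSeries ℂ)) • Lam y := by
    intro y
    apply hι
    rw [hιa, hLam, hEt.2, map_add, map_smul, map_smul, hLam, hLam, hXsqder, ← hu y]
    have hps : (X : PowerSeries ℂ) ^ (N+1) = X ^ N * X := pow_succ _ _
    simp only [smul_add, smul_smul]
    congr 1 <;> congr 1 <;> ring
  -- the divisibility lemma
  have hvanY : ∀ (x : E), x ∈ F → ∀ w : E, w ∈ F →
      ∀ y : Et, (X : PowerSeries ℂ)^N ∣ κ (toChk x) (Lam y) →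
      (X : PowerSeries ℂ)^N ∣ κ (toChk w) (Lam y) →
      aE x = (X : PowerSeries ℂ) • w →
      (X : PowerSeries ℂ)^N ∣ κ (toChk x) (Lam (u y)) := by
    intro x hxF w hwF y hg hgw haxw
    have hahom : aDelta δ (κ (toChk x) (Lam y)) - κ (toChk x) (aE (Lam y))
        = (X : PowerSeries ℂ) * (κ (toChk w) (Lam y)) := by
      have e1 : κ (toChk (aE x)) = -((X : PowerSeries ℂ) • κ (toChk w)) := by
        rw [haxw, hKX]
      have e2 := hK1 x
      rw [e1] at e2
      have e3 : aHom aE (aDelta δ) hE (isAB_aDelta δ) (κ (toChk x))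
          = (X : PowerSeries ℂ) • κ (toChk w) := by
        have := congrArg Neg.neg e2
        rw [neg_neg, neg_neg] at this
        exact this.symm
      have e4 := congrArg (fun (f : E →ₗ[PowerSeries ℂ] PowerSeries ℂ) => f (Lam y)) e3
      simpa [aHom_apply, smul_eq_mul] using e4
    have h5 : κ (toChk x) (aE (Lam y)) = (X : PowerSeries ℂ) * κ (toChk x) (Lam (u y))
        + (N : PowerSeries ℂ) * (X : PowerSeries ℂ) * κ (toChk x) (Lam y) := by
      rw [h1 y, map_add, map_smul, map_smul, smul_eq_mul, smul_eq_mul]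
    have h6 : (X : PowerSeries ℂ) * κ (toChk x) (Lam (u y))
        = aDelta δ (κ (toChk x) (Lam y)) - (X : PowerSeries ℂ) * (κ (toChk w) (Lam y))
          - (N : PowerSeries ℂ) * (X : PowerSeries ℂ) * κ (toChk x) (Lam y) := by
      rw [← hahom]; rw [h5]; ring
    have hdvd1 : (X : PowerSeries ℂ)^(N+1) ∣ aDelta δ (κ (toChk x) (Lam y)) := by
      show (X : PowerSeries ℂ)^(N+1) ∣
        (PowerSeries.C δ * X) * (κ (toChk x) (Lam y))
          + (X : PowerSeries ℂ)^2 * PowerSeries.derivative ℂ (κ (toChk x) (Lam y))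
      refine dvd_add ?_ (ABAux.X_pow_succ_dvd_X_sq_mul_derivative hg)
      obtain ⟨t, ht⟩ := hg
      exact ⟨PowerSeries.C δ * t, by rw [ht]; ring⟩
    have hdvd2 : (X : PowerSeries ℂ)^(N+1) ∣ (X : PowerSeries ℂ) * (κ (toChk w) (Lam y)) := by
      obtain ⟨t, ht⟩ := hgw
      exact ⟨t, by rw [ht]; ring⟩
    have hdvd3 : (X : PowerSeries ℂ)^(N+1) ∣
        (N : PowerSeries ℂ) * (X : PowerSeries ℂ) * κ (toChk x) (Lam y) := by
      obtain ⟨t, ht⟩ := hg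
      exact ⟨(N : PowerSeries ℂ) * t, by rw [ht]; ring⟩
    refine ABAux.X_dvd_cancel (N := N) ?_
    rw [h6]
    exact dvd_sub (dvd_sub hdvd1 hdvd2) hdvd3
  have hdvd : ∀ (y : Et) (x : E), x ∈ F → (X : PowerSeries ℂ)^N ∣ κ (toChk x) (Lam y) := by
    set Y : Submodule (PowerSeries ℂ) Et :=
      { carrier := {y | ∀ x ∈ F, (X : PowerSeries ℂ)^N ∣ κ (toChk x) (Lam y)}
        add_mem' := by
          intro a b ha hb x hxF
          rw [map_add, map_add]
          exact dvd_add (ha x hxF) (hb x hxF)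
        zero_mem' := by
          intro x hxF
          rw [map_zero, map_zero]
          exact dvd_zero _
        smul_mem' := by
          intro S y hy x hxF
          rw [map_smul, map_smul, smul_eq_mul]
          exact Dvd.dvd.mul_left (hy x hxF) S } with hYdef
    have hYu : ∀ y ∈ Y, u y ∈ Y := by
      intro y hy x hxF
      obtain ⟨w, hwF, hw⟩ := hFbig.2.1 x hxF
      exact hvanY x hxF w hwF y (hy x hxF) (hy w hwF) hw
    have hYtop : Y = ⊤ := by
      refine hmin Y ?_ ?_ ?_
      · intro y hy
        rw [← hu y]
        exact Y.smul_mem _ (hYu y hy)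
      · intro y hy
        exact ⟨u y, hYu y hy, (hu y).symm⟩
      · rintro z ⟨e, rfl⟩
        intro x hxF
        rw [hLamι, map_smul, smul_eq_mul]
        exact Dvd.dvd.mul_right dvd_rfl _
    intro y x hxF
    have : y ∈ Y := hYtop ▸ Submodule.mem_top
    exact this x hxF
    -- additivity of u
  have hu_add : ∀ y y' : Et, u (y + y') = u y + u y' := by
    intro y y'
    apply hXinjEt
    show (X : PowerSeries ℂ) • u (y + y') = (X : PowerSeries ℂ) • (u y + u y')
    rw [hu, hEt.1, ← hu y, ← hu y', smul_add]
  -- the "dual b⁻¹a" operator on functionals on Et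
  have psi : ∀ (L : Et →ₗ[PowerSeries ℂ] PowerSeries ℂ),
      ∃ P : Et →ₗ[PowerSeries ℂ] PowerSeries ℂ, ∀ y, P y =
        PowerSeries.C δ * L y + (X : PowerSeries ℂ) * PowerSeries.derivative ℂ (L y)
          - L (u y) := by
    intro L
    refine ⟨LinearMap.mk (AddHom.mk (fun y => PowerSeries.C δ * L y
        + (X : PowerSeries ℂ) * PowerSeries.derivative ℂ (L y) - L (u y)) ?_) ?_,
      fun y => rfl⟩
    · intro a b
      rw [hu_add, map_add, map_add, map_add]
      ring
    · intro S a
      dsimp only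
      rw [hu_smul S a]
      simp only [map_add, LinearMap.map_smul, RingHom.id_apply, smul_eq_mul]
      rw [Derivation.leibniz]
      simp only [smul_eq_mul]
      ring
  -- the submodule G of elements whose dual functional extends to Et
  set G : Submodule (PowerSeries ℂ) E :=
    { carrier := {e | ∃ L : Et →ₗ[PowerSeries ℂ] PowerSeries ℂ, κ (toChk e) = L.comp ι}
      add_mem' := by
        rintro a b ⟨La, hLa⟩ ⟨Lb, hLb⟩
        exact ⟨La + Lb, by rw [toChk_add, map_add, hLa, hLb]; rfl⟩
      zero_mem' := ⟨0, by rw [show toChk (0:E) = 0 from rfl, map_zero]; rfl⟩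
      smul_mem' := by
        rintro S e ⟨L, hL⟩
        refine ⟨sigmaAB S • L, ?_⟩
        rw [hK2, hL]
        rfl } with hGdef
  have hGmem : ∀ e : E, e ∈ G ↔
      ∃ L : Et →ₗ[PowerSeries ℂ] PowerSeries ℂ, κ (toChk e) = L.comp ι := fun e => Iff.rfl
  -- the key computation : aHom (L ∘ ι) = X • (ψL ∘ ι)
  have hcompKey : ∀ (L P : Et →ₗ[PowerSeries ℂ] PowerSeries ℂ),
      (∀ y, P y = PowerSeries.C δ * L y
        + (X : PowerSeries ℂ) * PowerSeries.derivative ℂ (L y) - L (u y)) →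
      aHom aE (aDelta δ) hE (isAB_aDelta δ) (L.comp ι) = (X : PowerSeries ℂ) • (P.comp ι) := by
    intro L P hP
    apply LinearMap.ext; intro z
    simp only [aHom_apply, LinearMap.smul_apply, LinearMap.comp_apply]
    rw [hP, smul_eq_mul]
    have e1 : L (ι (aE z)) = (X : PowerSeries ℂ) * L (u (ι z)) := by
      rw [hιa, ← hu (ι z), map_smul, smul_eq_mul]
    rw [e1]
    show (PowerSeries.C δ * X) * (L (ι z)) + (X:PowerSeries ℂ)^2
        * PowerSeries.derivative ℂ (L (ι z)) - (X : PowerSeries ℂ) * L (u (ι z)) = _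
    ring
  have hGSP : ∀ e ∈ G, ∃ w ∈ G, aE e = (X : PowerSeries ℂ) • w := by
    intro e he
    obtain ⟨L, hL⟩ := he
    obtain ⟨P, hP⟩ := psi L
    refine ⟨ofChk (κ.symm (P.comp ι)), ⟨P, by rw [toChk_ofChk, κ.apply_symm_apply]⟩, ?_⟩
    apply toChk_inj
    apply κ.injective
    rw [hK1, hL, hcompKey L P hP, hKX, toChk_ofChk, κ.apply_symm_apply]
  have hGF : G ≤ F := by
    refine hFbig.2.2 G ?_ hGSP
    intro e he
    obtain ⟨w, hwG, hw⟩ := hGSP e he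
    rw [hw]
    exact G.smul_mem _ hwG
  -- the linear functional Pi x on Et/bEt, for x in F
  have hvan : ∀ (x : E), x ∈ F → ∀ m ∈ bSub Et,
      PowerSeries.coeff N (((κ (toChk x)).comp Lam) m) = 0 := by
    rintro x hxF m ⟨y₀, rfl⟩
    show PowerSeries.coeff N (κ (toChk x) (Lam ((X : PowerSeries ℂ) • y₀))) = 0
    rw [map_smul, map_smul, smul_eq_mul]
    obtain ⟨t, ht⟩ := hdvd y₀ x hxF
    refine ABAux.coeff_eq_zero_of_dvd ⟨t, ?_⟩
    rw [ht]; ring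
  set Pi : F →ₗ[ℂ] Module.Dual ℂ (Et ⧸ bSub Et) :=
    { toFun := fun x => ABAux.coeffQuot (bSub Et) N ((κ (toChk (x:E))).comp Lam) (hvan x x.2)
      map_add' := by
        intro a b
        apply LinearMap.ext; intro q
        obtain ⟨y, rfl⟩ := Submodule.Quotient.mk_surjective _ q
        show PowerSeries.coeff N ((κ (toChk ((a:E) + (b:E)))) (Lam y)) = _
        rw [toChk_add, map_add, LinearMap.add_apply, map_add]
        rfl
      map_smul' := by
        intro c a
        apply LinearMap.ext; intro q
        obtain ⟨y, rfl⟩ := Submodule.Quotient.mk_surjective _ q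
        have hcoe : ((c • a : F) : E) = c • (a : E) := by
          rw [ABAux.csmul_def (c := c) (x := a)]
          rw [show (((PowerSeries.C c • a : F) : E)) = (PowerSeries.C c) • (a : E) from rfl]
          rw [← ABAux.csmul_def]
        show PowerSeries.coeff N ((κ (toChk ((c • a : F) : E))) (Lam y)) = _
        rw [hcoe, hKC, LinearMap.smul_apply, smul_eq_mul, PowerSeries.coeff_C_mul]
        rfl } with hPidef
  have hPimk : ∀ (x : F) (y : Et), Pi x (Submodule.Quotient.mk y)
      = PowerSeries.coeff N (κ (toChk (x:E)) (Lam y)) := fun x y => rfl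
    -- surjectivity of Pi
  have hPisurj : Function.Surjective Pi := by
    intro f
    set B := Module.Free.chooseBasis (PowerSeries ℂ) Et with hB
    set L : Et →ₗ[PowerSeries ℂ] PowerSeries ℂ :=
      (Finset.univ.sum fun i => (PowerSeries.C (f (Submodule.Quotient.mk (B i)))) • (B.coord i))
      with hLdef
    have hL0 : ∀ y, PowerSeries.coeff 0 (L y) = f (Submodule.Quotient.mk y) := by
      intro y
      have h1 : L y = Finset.univ.sum fun i =>
          PowerSeries.C (f (Submodule.Quotient.mk (B i))) * (B.repr y i) := by
        rw [hLdef, LinearMap.sum_apply]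
        refine Finset.sum_congr rfl fun i _ => ?_
        rw [LinearMap.smul_apply, Module.Basis.coord_apply, smul_eq_mul]
      rw [h1, map_sum]
      have h2 : ∀ i ∈ Finset.univ, PowerSeries.coeff 0
          (PowerSeries.C (f (Submodule.Quotient.mk (B i))) * (B.repr y i))
          = (PowerSeries.constantCoeff (B.repr y i)) * f (Submodule.Quotient.mk (B i)) := by
        intro i _
        rw [PowerSeries.coeff_C_mul, PowerSeries.coeff_zero_eq_constantCoeff]
        ring
      rw [Finset.sum_congr rfl h2]
      conv_rhs => rw [← B.sum_repr y]
      have h3 : (Submodule.Quotient.mk (Finset.univ.sum fun i => B.repr y i • B i) : Et ⧸ bSub Et)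
          = Finset.univ.sum fun i =>
            (PowerSeries.constantCoeff (B.repr y i)) •
              (Submodule.Quotient.mk (B i) : Et ⧸ bSub Et) := by
        rw [show (Submodule.Quotient.mk (Finset.univ.sum fun i => B.repr y i • B i) : Et ⧸ bSub Et)
            = (bSub Et).mkQ (Finset.univ.sum fun i => B.repr y i • B i) from rfl, map_sum]
        refine Finset.sum_congr rfl fun i _ => ?_
        rw [Submodule.mkQ_apply, ABAux.mk_smul_eq]
      rw [h3, map_sum]
      refine Finset.sum_congr rfl fun i _ => ?_
      rw [map_smul, smul_eq_mul]
    set x : E := ofChk (κ.symm (L.comp ι)) with hxdef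
    have hxG : x ∈ G := ⟨L, by rw [hxdef, toChk_ofChk, κ.apply_symm_apply]⟩
    refine ⟨⟨x, hGF hxG⟩, ?_⟩
    apply LinearMap.ext; intro q
    obtain ⟨y, rfl⟩ := Submodule.Quotient.mk_surjective _ q
    rw [hPimk]
    show PowerSeries.coeff N (κ (toChk x) (Lam y)) = f (Submodule.Quotient.mk y)
    rw [hxdef, toChk_ofChk, κ.apply_symm_apply, LinearMap.comp_apply, hLam, map_smul,
      smul_eq_mul, ABAux.coeff_N_X_pow_mul, hL0]
  -- kernel of Pi
  have hPiker : ∀ x : F, Pi x = 0 ↔ (Submodule.Quotient.mk x : F ⧸ bSub F) = 0 := by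
    intro x
    constructor
    · intro hPix
      have hco : ∀ y : Et, PowerSeries.coeff N (κ (toChk (x:E)) (Lam y)) = 0 := by
        intro y
        have := congrFun (congrArg DFunLike.coe hPix) (Submodule.Quotient.mk y)
        rw [hPimk] at this
        simpa using this
      have hdiv : ∀ y : Et, ∃ t, κ (toChk (x:E)) (Lam y) = (X : PowerSeries ℂ)^(N+1) * t := by
        intro y
        obtain ⟨t, ht⟩ := ABAux.dvd_succ_of_dvd_of_coeff_zero (hdvd y (x:E) x.2) (hco y)
        exact ⟨t, ht⟩
      choose g hg using hdiv
      have hXp1 : ((X : PowerSeries ℂ)^(N+1)) ≠ 0 := pow_ne_zero _ PowerSeries.X_ne_zero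
      have g_add : ∀ y y', g (y + y') = g y + g y' := by
        intro y y'
        apply mul_left_cancel₀ hXp1
        rw [← hg, map_add, map_add, hg, hg]
        ring
      have g_smul : ∀ (S : PowerSeries ℂ) y, g (S • y) = S * g y := by
        intro S y
        apply mul_left_cancel₀ hXp1
        rw [← hg, map_smul, map_smul, smul_eq_mul, hg]
        ring
      set L₁ : Et →ₗ[PowerSeries ℂ] PowerSeries ℂ :=
        LinearMap.mk (AddHom.mk g g_add) (fun S y => by simpa using g_smul S y) with hL₁def
      have hφ : κ (toChk (x:E)) = (X : PowerSeries ℂ) • (L₁.comp ι) := by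
        apply LinearMap.ext; intro e
        have e1 : (X : PowerSeries ℂ)^N * (κ (toChk (x:E)) e)
            = (X : PowerSeries ℂ)^N * ((X : PowerSeries ℂ) * g (ι e)) := by
          rw [show (X : PowerSeries ℂ)^N * (κ (toChk (x:E)) e)
              = κ (toChk (x:E)) ((X : PowerSeries ℂ)^N • e) from by
            rw [map_smul, smul_eq_mul], ← hLamι, hg]
          ring
        have e2 := mul_left_cancel₀ (pow_ne_zero N (PowerSeries.X_ne_zero (R := ℂ))) e1
        rw [LinearMap.smul_apply, LinearMap.comp_apply, smul_eq_mul]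
        exact e2
      set x₁ : E := ofChk (κ.symm (-(L₁.comp ι))) with hx₁def
      have hx₁G : x₁ ∈ G := ⟨-L₁, by
        rw [hx₁def, toChk_ofChk, κ.apply_symm_apply]
        rfl⟩
      have hxx₁ : (x : F).1 = (X : PowerSeries ℂ) • x₁ := by
        apply toChk_inj
        apply κ.injective
        rw [hKX, hx₁def, toChk_ofChk, κ.apply_symm_apply, hφ]
        rw [smul_neg, neg_neg]
      rw [Submodule.Quotient.mk_eq_zero]
      exact ⟨⟨x₁, hGF hx₁G⟩, by
        apply Subtype.ext
        show (X : PowerSeries ℂ) • x₁ = ((x : F) : E)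
        rw [← hxx₁]⟩
    · intro hmk
      rw [Submodule.Quotient.mk_eq_zero] at hmk
      obtain ⟨x₁, hx₁⟩ := hmk
      apply LinearMap.ext; intro q
      obtain ⟨y, rfl⟩ := Submodule.Quotient.mk_surjective _ q
      rw [hPimk, LinearMap.zero_apply]
      have hco : ((x : F) : E) = (X : PowerSeries ℂ) • ((x₁ : F) : E) := by
        rw [← hx₁]
        rfl
      rw [hco, hKX, LinearMap.neg_apply, LinearMap.smul_apply, smul_eq_mul, map_neg]
      obtain ⟨t, ht⟩ := hdvd y (x₁ : E) x₁.2
      rw [ht]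
      have : PowerSeries.coeff N ((X : PowerSeries ℂ) * ((X : PowerSeries ℂ)^N * t)) = 0 :=
        ABAux.coeff_eq_zero_of_dvd ⟨t, by ring⟩
      rw [this, neg_zero]
    -- the intertwining identity
  have hPiv : ∀ x : F, Pi (v x) = δ • (Pi x) - LinearMap.dualMap ubar (Pi x) := by
    intro x
    have haEx : aE (x : E) = (X : PowerSeries ℂ) • ((v x : F) : E) := by
      have h0 := congrArg (Subtype.val) (hv x)
      exact (h0.trans rfl).symm.trans rfl
    have hXchi : (X : PowerSeries ℂ) • κ (toChk ((v x : F) : E))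
        = aHom aE (aDelta δ) hE (isAB_aDelta δ) (κ (toChk (x : E))) := by
      have e2 := hK1 (x : E)
      rw [haEx, hKX] at e2
      have := congrArg Neg.neg e2
      rw [neg_neg, neg_neg] at this
      exact this
    apply LinearMap.ext; intro q
    obtain ⟨y, rfl⟩ := Submodule.Quotient.mk_surjective _ q
    have e3 := congrArg (fun (fn : E →ₗ[PowerSeries ℂ] PowerSeries ℂ) => fn (Lam y)) hXchi
    simp only [LinearMap.smul_apply, aHom_apply, smul_eq_mul] at e3
    have e4 : κ (toChk (x:E)) (aE (Lam y))
        = (X : PowerSeries ℂ) * κ (toChk (x:E)) (Lam (u y))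
          + (N : PowerSeries ℂ) * (X : PowerSeries ℂ) * κ (toChk (x:E)) (Lam y) := by
      rw [h1 y, map_add, map_smul, map_smul, smul_eq_mul, smul_eq_mul]
    have e5 : (X : PowerSeries ℂ) * (κ (toChk ((v x : F) : E)) (Lam y))
        = (X : PowerSeries ℂ) * (PowerSeries.C δ * κ (toChk (x:E)) (Lam y)
            + (X : PowerSeries ℂ) * PowerSeries.derivative ℂ (κ (toChk (x:E)) (Lam y))
            - κ (toChk (x:E)) (Lam (u y))
            - (N : PowerSeries ℂ) * κ (toChk (x:E)) (Lam y)) := by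
      rw [e3, e4]
      show (PowerSeries.C δ * X) * (κ (toChk (x:E)) (Lam y)) + (X : PowerSeries ℂ)^2 *
          PowerSeries.derivative ℂ (κ (toChk (x:E)) (Lam y)) - _ = _
      ring
    have e6 := mul_left_cancel₀ (PowerSeries.X_ne_zero (R := ℂ)) e5
    rw [hPimk, e6]
    -- take coefficients
    have hc1 : PowerSeries.coeff N ((X : PowerSeries ℂ) *
        PowerSeries.derivative ℂ (κ (toChk (x:E)) (Lam y)))
        = N * PowerSeries.coeff N (κ (toChk (x:E)) (Lam y)) :=
      ABAux.coeff_X_mul_derivative (hdvd y (x:E) x.2)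
    have hc2 : ((N : ℕ) : PowerSeries ℂ) = PowerSeries.C ((N : ℕ) : ℂ) :=
      (map_natCast (PowerSeries.C (R := ℂ)) N).symm
    rw [map_sub, map_sub, map_add, PowerSeries.coeff_C_mul, hc1, hc2, PowerSeries.coeff_C_mul]
    have hrhs : (δ • (Pi x) - LinearMap.dualMap ubar (Pi x)) (Submodule.Quotient.mk y)
        = δ * PowerSeries.coeff N (κ (toChk (x:E)) (Lam y))
          - PowerSeries.coeff N (κ (toChk (x:E)) (Lam (u y))) := by
      rw [LinearMap.sub_apply, LinearMap.smul_apply, LinearMap.dualMap_apply, hubar, hPimk,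
        hPimk, smul_eq_mul]
    rw [hrhs]
    ring
  -- the operator T on Et/bEt
  set T : (Et ⧸ bSub Et) →ₗ[ℂ] (Et ⧸ bSub Et) :=
    (-δ) • (1 : Module.End ℂ (Et ⧸ bSub Et)) - (-ubar) with hTdef
  have hPivT : ∀ x : F, Pi (-(v x)) = LinearMap.dualMap T (Pi x) := by
    intro x
    rw [map_neg, hPiv]
    apply LinearMap.ext; intro q
    rw [LinearMap.neg_apply, LinearMap.sub_apply, LinearMap.smul_apply,
      LinearMap.dualMap_apply, LinearMap.dualMap_apply, hTdef]
    rw [LinearMap.sub_apply, LinearMap.smul_apply, Module.End.one_apply, LinearMap.neg_apply,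
      map_sub, map_smul, map_neg]
    simp only [smul_eq_mul]
    ring
  -- correspondence of powers
  have hstep : ∀ x : F, (-vbar) (Submodule.Quotient.mk x)
      = (Submodule.Quotient.mk (-(v x)) : F ⧸ bSub F) := by
    intro x
    rw [LinearMap.neg_apply, hvbar]
    exact (Submodule.Quotient.mk_neg _).symm
  have hpow : ∀ (k : ℕ) (x : F), ∃ xk : F,
      ((-vbar)^k) (Submodule.Quotient.mk x) = Submodule.Quotient.mk xk ∧
      Pi xk = ((LinearMap.dualMap T)^k) (Pi x) := by
    intro k
    induction k with
    | zero => exact fun x => ⟨x, by simp, by simp⟩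
    | succ k ih =>
      intro x
      obtain ⟨xk, hk1, hk2⟩ := ih (-(v x))
      refine ⟨xk, ?_, ?_⟩
      · rw [pow_succ, Module.End.mul_apply, hstep, hk1]
      · rw [hk2, hPivT, pow_succ, Module.End.mul_apply]
  have haeval : ∀ (p : Polynomial ℂ) (x : F), ∃ xp : F,
      (Polynomial.aeval (-vbar) p) (Submodule.Quotient.mk x) = Submodule.Quotient.mk xp ∧
      Pi xp = (Polynomial.aeval (LinearMap.dualMap T) p) (Pi x) := by
    intro p x
    choose w hw1 hw2 using fun k => hpow k x
    refine ⟨Finset.sum (Finset.range (p.natDegree + 1)) (fun i => p.coeff i • w i), ?_, ?_⟩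
    · rw [Polynomial.aeval_eq_sum_range, LinearMap.sum_apply, ABAux.mk_sum_csmul]
      refine Finset.sum_congr rfl fun i _ => ?_
      rw [LinearMap.smul_apply, hw1]
    · rw [map_sum, Polynomial.aeval_eq_sum_range, LinearMap.sum_apply]
      refine Finset.sum_congr rfl fun i _ => ?_
      rw [map_smul, hw2, LinearMap.smul_apply]
  have hzero_iff : ∀ p : Polynomial ℂ,
      Polynomial.aeval (-vbar) p = 0 ↔ Polynomial.aeval (LinearMap.dualMap T) p = 0 := by
    intro p
    constructor
    · intro h
      apply LinearMap.ext; intro f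
      obtain ⟨x, rfl⟩ := hPisurj f
      obtain ⟨xp, hp1, hp2⟩ := haeval p x
      rw [h, LinearMap.zero_apply] at hp1
      rw [LinearMap.zero_apply, ← hp2]
      exact (hPiker xp).mpr hp1.symm
    · intro h
      apply LinearMap.ext; intro q
      obtain ⟨x, rfl⟩ := Submodule.Quotient.mk_surjective _ q
      obtain ⟨xp, hp1, hp2⟩ := haeval p x
      rw [h, LinearMap.zero_apply] at hp2
      rw [LinearMap.zero_apply, hp1]
      exact (hPiker xp).mp hp2
  -- finite dimensionality
  haveI hQfin : Module.Finite ℂ (Et ⧸ bSub Et) := ABAux.finite_quotient_bSub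
  haveI : FiniteDimensional ℂ (Et ⧸ bSub Et) := hQfin
  rcases subsingleton_or_nontrivial (Et ⧸ bSub Et) with hss | hnt
  · -- degenerate case : everything trivial
    have hmu : minpoly ℂ (-ubar) = 1 := ABAux.minpoly_end_subsingleton _
    have hDss : ∀ f g : Module.Dual ℂ (Et ⧸ bSub Et), f = g := by
      intro f g
      apply LinearMap.ext; intro q
      rw [Subsingleton.elim q 0, map_zero, map_zero]
    have hFss : ∀ q : F ⧸ bSub F, q = 0 := by
      intro q
      obtain ⟨x, rfl⟩ := Submodule.Quotient.mk_surjective _ q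
      exact (hPiker x).mp (hDss _ _)
    haveI : Subsingleton (F ⧸ bSub F) := ⟨fun a b => by rw [hFss a, hFss b]⟩
    have hmv : minpoly ℂ (-vbar) = 1 := ABAux.minpoly_end_subsingleton _
    intro z
    rw [hmv, hmu]
    simp
  · -- main case
    haveI : Nontrivial (Module.End ℂ (Et ⧸ bSub Et)) := by
      obtain ⟨q0, hq0⟩ := exists_ne (0 : Et ⧸ bSub Et)
      exact ⟨1, 0, fun h => hq0 (by
        have := congrFun (congrArg DFunLike.coe h) q0
        simpa using this)⟩
    have hAint : IsIntegral ℂ (-ubar) := LinearMap.isIntegral _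
    have hmT : minpoly ℂ T = ((-1:ℂ) ^ (minpoly ℂ (-ubar)).natDegree) •
        ((minpoly ℂ (-ubar)).comp (Polynomial.C (-δ) - Polynomial.X)) := by
      rw [hTdef]
      exact ABAux.minpoly_smul_one_sub (-ubar) hAint (-δ)
    have hmTd : minpoly ℂ (LinearMap.dualMap T) = minpoly ℂ T := ABAux.minpoly_dualMap T
    have hmonicTd : (minpoly ℂ (LinearMap.dualMap T)).Monic :=
      minpoly.monic (LinearMap.isIntegral _)
    have hBint : IsIntegral ℂ (-vbar) :=
      ⟨minpoly ℂ (LinearMap.dualMap T), hmonicTd, (hzero_iff _).mpr (minpoly.aeval ℂ _)⟩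
    have hd1 : minpoly ℂ (-vbar) ∣ minpoly ℂ (LinearMap.dualMap T) :=
      minpoly.dvd ℂ _ ((hzero_iff _).mpr (minpoly.aeval ℂ _))
    have hd2 : minpoly ℂ (LinearMap.dualMap T) ∣ minpoly ℂ (-vbar) :=
      minpoly.dvd ℂ _ ((hzero_iff _).mp (minpoly.aeval ℂ _))
    have hmv : minpoly ℂ (-vbar) = minpoly ℂ (LinearMap.dualMap T) :=
      Polynomial.eq_of_monic_of_associated (minpoly.monic hBint) hmonicTd
        (associated_of_dvd_dvd hd1 hd2)
    intro z
    rw [hmv, hmTd, hmT]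
    rw [Polynomial.eval_smul, Polynomial.eval_comp, Polynomial.eval_sub, Polynomial.eval_C,
      Polynomial.eval_X, smul_eq_mul]
end
end

section
/- Let F be a simple pole (a,b)-module, and let β be an eigenvalue of the induced endomorphism b⁻¹a of F/bF whose multiplicity as a root of the minimal polynomial of this endomorphism is d. Assume β is minimal in its class modulo ℤ, i.e. no complex number of the form β − m with m a positive integer is an eigenvalue of b⁻¹a on F/bF. Then there exist elements e_1, …, e_d of F whose classes in F/bF are linearly independent over ℂ, satisfying the relations a·e_j = β·b·e_j + b·e_{j−1} in F for all j ∈ {1, …, d}, with the convention e_0 = 0. -/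
open PowerSeries

noncomputable section

/-! ### Auxiliary lemmas for `stmt7` -/

lemma csmul_def' {M : Type*} [AddCommGroup M] [Module (PowerSeries ℂ) M] (c : ℂ) (x : M) :
    c • x = (PowerSeries.C c) • x := by
  have h : c • x = (algebraMap ℂ (PowerSeries ℂ) c) • x := rfl
  rw [h, PowerSeries.algebraMap_apply]
  simp

lemma csmul_comm' {M : Type*} [AddCommGroup M] [Module (PowerSeries ℂ) M]
    (c : ℂ) (S : PowerSeries ℂ) (x : M) : S • (c • x) = c • (S • x) := by
  rw [csmul_def', csmul_def', smul_smul, smul_smul, mul_comm]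

lemma jordan_li {K V : Type*} [Field K] [AddCommGroup V] [Module K V]
    (N : Module.End K V) (d : ℕ) (v : V) (h0 : (N ^ d) v = 0)
    (h1 : (N ^ (d - 1)) v ≠ 0) :
    LinearIndependent K (fun j : Fin d => (N ^ (d - 1 - j.1)) v) := by
  rw [Fintype.linearIndependent_iff]
  intro g hg
  classical
  by_contra hc
  push_neg at hc
  obtain ⟨j0, hj0⟩ := hc
  set S : Finset (Fin d) := Finset.univ.filter (fun j => g j ≠ 0) with hS
  have hSne : S.Nonempty := ⟨j0, by simp [hS, hj0]⟩
  set jm := S.max' hSne with hjmdef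
  have hjm : g jm ≠ 0 := by
    have := S.max'_mem hSne
    simpa [hS] using this
  have happ : (N ^ jm.1) (∑ j, g j • (N ^ (d - 1 - j.1)) v) = 0 := by rw [hg]; simp
  rw [map_sum] at happ
  have hterm : ∀ j : Fin d, (N ^ jm.1) (g j • (N ^ (d - 1 - j.1)) v)
      = g j • (N ^ (d - 1 - j.1 + jm.1)) v := by
    intro j
    rw [map_smul, ← Module.End.mul_apply, ← pow_add, add_comm]
  rw [Finset.sum_congr rfl (fun j _ => hterm j)] at happ
  have hzero : ∀ j : Fin d, j ∈ Finset.univ → j ≠ jm →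
      g j • (N ^ (d - 1 - j.1 + jm.1)) v = 0 := by
    intro j _ hj
    by_cases hgj : g j = 0
    · simp [hgj]
    · have hjS : j ∈ S := by simp [hS, hgj]
      have hle : j ≤ jm := S.le_max' j hjS
      have hlt : j.1 < jm.1 := lt_of_le_of_ne hle (by simpa [Fin.ext_iff] using hj)
      have hd1 : j.1 < d := j.2
      have hd2 : jm.1 < d := jm.2
      obtain ⟨k, hk⟩ : ∃ k, d - 1 - j.1 + jm.1 = k + d := ⟨d - 1 - j.1 + jm.1 - d, by omega⟩
      rw [hk, pow_add, Module.End.mul_apply, h0, map_zero, smul_zero]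
  rw [Finset.sum_eq_single jm hzero (by simp)] at happ
  have heq : d - 1 - jm.1 + jm.1 = d - 1 := by have := jm.2; omega
  rw [heq] at happ
  exact h1 (by simpa [hjm] using (smul_eq_zero.mp happ))

lemma exists_jordan_vector {V : Type*} [AddCommGroup V] [Module ℂ V] [FiniteDimensional ℂ V]
    (f : Module.End ℂ V) (β : ℂ) (hd : 0 < (minpoly ℂ f).rootMultiplicity β) :
    ∃ v : V, ((f - β • 1) ^ ((minpoly ℂ f).rootMultiplicity β)) v = 0 ∧
      ((f - β • 1) ^ ((minpoly ℂ f).rootMultiplicity β - 1)) v ≠ 0 := by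
  set p := minpoly ℂ f with hp
  set dd := p.rootMultiplicity β with hdd
  have hInt : IsIntegral ℂ f := Algebra.IsIntegral.isIntegral f
  have hp0 : p ≠ 0 := minpoly.ne_zero hInt
  set q := p /ₘ (Polynomial.X - Polynomial.C β) ^ dd with hq
  have hpq : (Polynomial.X - Polynomial.C β) ^ dd * q = p :=
    Polynomial.pow_mul_divByMonic_rootMultiplicity_eq p β
  have hq0 : q ≠ 0 := fun h => hp0 (by rw [← hpq, h, mul_zero])
  have hXC : (Polynomial.X - Polynomial.C β : Polynomial ℂ) ≠ 0 := Polynomial.X_sub_C_ne_zero β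
  have hg0 : (Polynomial.X - Polynomial.C β) ^ (dd - 1) * q ≠ 0 :=
    mul_ne_zero (pow_ne_zero _ hXC) hq0
  have haev : ∀ k : ℕ, ∀ w : V,
      ((f - β • 1) ^ k) ((Polynomial.aeval f q) w)
        = (Polynomial.aeval f ((Polynomial.X - Polynomial.C β) ^ k * q)) w := by
    intro k w
    have hXCf : Polynomial.aeval f (Polynomial.X - Polynomial.C β) = f - β • 1 := by
      rw [map_sub, Polynomial.aeval_X, Polynomial.aeval_C, Module.algebraMap_end_eq_smul_id]
      rfl
    rw [map_mul, map_pow, hXCf, Module.End.mul_apply]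
  have hann : Polynomial.aeval f ((Polynomial.X - Polynomial.C β) ^ (dd - 1) * q) ≠ 0 := by
    intro h
    have hdvd := minpoly.dvd ℂ f h
    have hle := Polynomial.natDegree_le_of_dvd hdvd hg0
    rw [Polynomial.natDegree_mul (pow_ne_zero _ hXC) hq0, Polynomial.natDegree_pow,
      Polynomial.natDegree_X_sub_C] at hle
    have hdeg : p.natDegree = dd + q.natDegree := by
      conv_lhs => rw [← hpq]
      rw [Polynomial.natDegree_mul (pow_ne_zero _ hXC) hq0, Polynomial.natDegree_pow,
        Polynomial.natDegree_X_sub_C]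
      ring
    rw [← hp] at hle
    omega
  obtain ⟨w, hw⟩ :
      ∃ w, (Polynomial.aeval f ((Polynomial.X - Polynomial.C β) ^ (dd - 1) * q)) w ≠ 0 := by
    by_contra h
    push_neg at h
    exact hann (LinearMap.ext h)
  refine ⟨Polynomial.aeval f q w, ?_, ?_⟩
  · rw [haev, hpq, hp, minpoly.aeval]
    rfl
  · rw [haev]
    exact hw

section Complete

variable {F : Type} [AddCommGroup F] [Module (PowerSeries ℂ) F]
  [Module.Free (PowerSeries ℂ) F] [Module.Finite (PowerSeries ℂ) F]

omit [Module.Free (PowerSeries ℂ) F] [Module.Finite (PowerSeries ℂ) F] in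
lemma pi_coord_dvd {ι : Type*} [Fintype ι]
    (E : F ≃ₗ[PowerSeries ℂ] (ι → PowerSeries ℂ)) (x : F) (n : ℕ)
    (h : ∀ i, (PowerSeries.X : PowerSeries ℂ) ^ n ∣ E x i) :
    ∃ y, x = (PowerSeries.X : PowerSeries ℂ) ^ n • y := by
  choose S hS using h
  refine ⟨E.symm S, ?_⟩
  apply E.injective
  rw [map_smul, LinearEquiv.apply_symm_apply]
  funext i
  simp only [Pi.smul_apply, smul_eq_mul]
  exact hS i

omit [Module.Free (PowerSeries ℂ) F] [Module.Finite (PowerSeries ℂ) F] in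
lemma coord_dvd_of {ι : Type*} [Fintype ι]
    (E : F ≃ₗ[PowerSeries ℂ] (ι → PowerSeries ℂ)) (x y : F) (n : ℕ)
    (h : x = (PowerSeries.X : PowerSeries ℂ) ^ n • y) (i : ι) :
    (PowerSeries.X : PowerSeries ℂ) ^ n ∣ E x i :=
  ⟨E y i, by rw [h, map_smul]; simp [smul_eq_mul]⟩

lemma hausdorff_zero (x : F)
    (h : ∀ n : ℕ, ∃ y, x = (PowerSeries.X : PowerSeries ℂ) ^ n • y) : x = 0 := by
  set B := Module.Free.chooseBasis (PowerSeries ℂ) F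
  set E := B.equivFun
  have hx : E x = 0 := by
    funext i
    apply PowerSeries.ext
    intro m
    obtain ⟨y, hy⟩ := h (m + 1)
    have := coord_dvd_of E x y (m + 1) hy i
    rw [PowerSeries.X_pow_dvd_iff] at this
    simpa using this m (by omega)
  have := congrArg E.symm hx
  simpa using this

lemma complete_limit (z : ℕ → F)
    (hz : ∀ n, ∃ y, z (n + 1) - z n = (PowerSeries.X : PowerSeries ℂ) ^ n • y) :
    ∃ w : F, ∀ n, ∃ y, w - z n = (PowerSeries.X : PowerSeries ℂ) ^ n • y := by
  set B := Module.Free.chooseBasis (PowerSeries ℂ) F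
  set E := B.equivFun
  have tel : ∀ p q : ℕ, p ≤ q → ∃ y, z q - z p = (PowerSeries.X : PowerSeries ℂ) ^ p • y := by
    intro p q hpq
    induction q with
    | zero =>
        have : p = 0 := by omega
        subst this; exact ⟨0, by simp⟩
    | succ q ih =>
        rcases Nat.lt_or_ge p (q + 1) with hlt | hge
        · have hpq' : p ≤ q := by omega
          obtain ⟨y₁, hy₁⟩ := ih hpq'
          obtain ⟨y₂, hy₂⟩ := hz q
          refine ⟨(PowerSeries.X : PowerSeries ℂ) ^ (q - p) • y₂ + y₁, ?_⟩
          have hsplit : z (q + 1) - z p = (z (q + 1) - z q) + (z q - z p) := by abel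
          have hqe : p + (q - p) = q := by omega
          rw [hsplit, hy₁, hy₂, smul_add, smul_smul, ← pow_add, hqe]
        · have : p = q + 1 := by omega
          subst this; exact ⟨0, by simp⟩
  refine ⟨E.symm (fun i => PowerSeries.mk (fun m => PowerSeries.coeff m (E (z (m + 1)) i))), ?_⟩
  intro n
  apply pi_coord_dvd E
  intro i
  rw [PowerSeries.X_pow_dvd_iff]
  intro m hm
  rw [map_sub]
  simp only [Pi.sub_apply, map_sub, LinearEquiv.apply_symm_apply, PowerSeries.coeff_mk]
  obtain ⟨y, hy⟩ := tel (m + 1) n (by omega)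
  have hc := coord_dvd_of E (z n - z (m + 1)) y (m + 1) hy i
  rw [PowerSeries.X_pow_dvd_iff] at hc
  have h2 : PowerSeries.coeff m (E (z n) i) = PowerSeries.coeff m (E (z (m + 1)) i) := by
    have h3 := hc m (by omega)
    rw [map_sub] at h3
    simp only [Pi.sub_apply, map_sub] at h3
    exact sub_eq_zero.mp h3
  rw [← h2, sub_self]

end Complete


theorem stmt7 (F : Type) [AddCommGroup F] [Module (PowerSeries ℂ) F]
    [Module.Free (PowerSeries ℂ) F] [Module.Finite (PowerSeries ℂ) F]
    (aF : F → F) (hF : IsAB aF) (hSP : SimplePole aF)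
    (u : F → F) (hu : ∀ x, (PowerSeries.X : PowerSeries ℂ) • u x = aF x)
    (ubar : (F ⧸ bSub F) →ₗ[ℂ] (F ⧸ bSub F))
    (hubar : ∀ x : F, ubar (Submodule.Quotient.mk x) = Submodule.Quotient.mk (u x))
    (β : ℂ) (d : ℕ)
    (heig : Module.End.HasEigenvalue ubar β)
    (hd : (minpoly ℂ ubar).rootMultiplicity β = d)
    (hmin : ∀ m : ℕ, 0 < m → ¬ Module.End.HasEigenvalue ubar (β - m)) :
    ∃ e : ℕ → F, e 0 = 0 ∧
      LinearIndependent ℂ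
        (fun j : Fin d => (Submodule.Quotient.mk (e (j.1 + 1)) : F ⧸ bSub F)) ∧
      ∀ j : ℕ, 1 ≤ j → j ≤ d →
        aF (e j) = (PowerSeries.C β * PowerSeries.X) • e j +
          (PowerSeries.X : PowerSeries ℂ) • e (j - 1) := by
  classical
  have Xne : (PowerSeries.X : PowerSeries ℂ) ≠ 0 := PowerSeries.X_ne_zero
  have Xinj : ∀ x y : F, (PowerSeries.X : PowerSeries ℂ) • x
      = (PowerSeries.X : PowerSeries ℂ) • y → x = y :=
    fun x y h => smul_right_injective F Xne h
  -- basic properties of u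
  have u_add : ∀ x y : F, u (x + y) = u x + u y := by
    intro x y
    apply Xinj
    rw [smul_add, hu, hu, hu, hF.1]
  have u_zero : u 0 = 0 := by
    have h := u_add 0 0
    rw [add_zero] at h
    have h2 := h.symm
    exact add_eq_left.mp h2
  have u_csmul : ∀ (c : ℂ) (x : F), u (c • x) = c • u x := by
    intro c x
    apply Xinj
    rw [hu]
    calc aF (c • x) = aF ((PowerSeries.C c) • x) := by rw [← csmul_def']
      _ = (PowerSeries.C c) • aF x +
            ((PowerSeries.X : PowerSeries ℂ) ^ 2 *
              PowerSeries.derivative ℂ (PowerSeries.C c)) • x := hF.2 _ _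
      _ = (PowerSeries.C c) • ((PowerSeries.X : PowerSeries ℂ) • u x) := by
            rw [PowerSeries.derivative_C, mul_zero, zero_smul, add_zero, ← hu]
      _ = (PowerSeries.X : PowerSeries ℂ) • (c • u x) := by
            rw [← csmul_def']
            exact (csmul_comm' c (PowerSeries.X : PowerSeries ℂ) (u x)).symm
  have u_Xsmul : ∀ x : F, u ((PowerSeries.X : PowerSeries ℂ) • x)
      = (PowerSeries.X : PowerSeries ℂ) • u x + (PowerSeries.X : PowerSeries ℂ) • x := by
    intro x
    apply Xinj
    rw [hu, hF.2, PowerSeries.derivative_X, mul_one, ← hu, smul_add, pow_two, mul_smul]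
  have u_Xpow : ∀ (k : ℕ) (x : F), u ((PowerSeries.X : PowerSeries ℂ) ^ k • x)
      = (PowerSeries.X : PowerSeries ℂ) ^ k • u x
        + (k : ℂ) • ((PowerSeries.X : PowerSeries ℂ) ^ k • x) := by
    intro k
    induction k with
    | zero => intro x; simp
    | succ k ih =>
        intro x
        have hps : (PowerSeries.X : PowerSeries ℂ) ^ (k + 1) • x
            = (PowerSeries.X : PowerSeries ℂ) • ((PowerSeries.X : PowerSeries ℂ) ^ k • x) := by
          rw [← mul_smul, ← pow_succ']
        rw [hps, u_Xsmul, ih]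
        rw [smul_add, ← mul_smul, ← pow_succ', csmul_comm', ← hps]
        push_cast
        rw [add_smul, one_smul]
        abel
  -- quotient facts
  have hmkX : ∀ x : F,
      (Submodule.Quotient.mk ((PowerSeries.X : PowerSeries ℂ) • x) : F ⧸ bSub F) = 0 := by
    intro x
    rw [Submodule.Quotient.mk_eq_zero]
    exact ⟨x, rfl⟩
  have hmk_smul : ∀ (S : PowerSeries ℂ) (x : F),
      (Submodule.Quotient.mk (S • x) : F ⧸ bSub F) = S • Submodule.Quotient.mk x :=
    fun S x => Submodule.Quotient.mk_smul _ S x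
  have hmk_csmul : ∀ (c : ℂ) (x : F),
      (Submodule.Quotient.mk (c • x) : F ⧸ bSub F) = c • Submodule.Quotient.mk x := by
    intro c x
    rw [csmul_def', hmk_smul, ← csmul_def']
  have hmk_eq_zero : ∀ x : F, (Submodule.Quotient.mk x : F ⧸ bSub F) = 0 ↔
      ∃ y, (PowerSeries.X : PowerSeries ℂ) • y = x := by
    intro x
    rw [Submodule.Quotient.mk_eq_zero]
    constructor
    · rintro ⟨y, hy⟩; exact ⟨y, hy⟩
    · rintro ⟨y, hy⟩; exact ⟨y, hy⟩
  -- finite dimensionality of the quotient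
  have hsmul_const : ∀ (S : PowerSeries ℂ) (v : F ⧸ bSub F),
      S • v = (PowerSeries.constantCoeff S) • v := by
    intro S v
    obtain ⟨x, rfl⟩ := Submodule.Quotient.mk_surjective _ v
    obtain ⟨Tq, hTq⟩ : (PowerSeries.X : PowerSeries ℂ) ∣
        (S - PowerSeries.C (PowerSeries.constantCoeff S)) := by
      rw [PowerSeries.X_dvd_iff]; simp
    have hS : S = PowerSeries.C (PowerSeries.constantCoeff S)
        + (PowerSeries.X : PowerSeries ℂ) * Tq := by
      rw [← hTq]; ring
    rw [← hmk_smul]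
    conv_lhs => rw [hS]
    rw [add_smul, mul_smul, Submodule.Quotient.mk_add, hmkX, add_zero, hmk_smul, ← csmul_def']
  haveI hfinV : Module.Finite ℂ (F ⧸ bSub F) := by
    obtain ⟨s, hs⟩ := Module.finite_def.mp
      (inferInstance : Module.Finite (PowerSeries ℂ) (F ⧸ bSub F))
    refine ⟨⟨s, ?_⟩⟩
    rw [eq_top_iff]
    intro v _
    have hv : v ∈ Submodule.span (PowerSeries ℂ) (s : Set (F ⧸ bSub F)) := by
      rw [hs]; trivial
    refine Submodule.span_induction (fun x hx => Submodule.subset_span hx)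
      (Submodule.zero_mem _) (fun x y _ _ hx hy => Submodule.add_mem _ hx hy)
      (fun S x _ hx => ?_) hv
    rw [hsmul_const]
    exact Submodule.smul_mem _ _ hx
  -- surjectivity of ubar - (β - 1 - k) on each level
  have lev : ∀ (k : ℕ) (vv : F ⧸ bSub F), ∃ v',
      ubar v' - (β - 1 - k) • v' = vv := by
    intro k vv
    have hne : ¬ Module.End.HasEigenvalue ubar (β - 1 - k) := by
      have h := hmin (k + 1) (Nat.succ_pos k)
      have he : β - 1 - (k : ℂ) = β - ((k + 1 : ℕ) : ℂ) := by push_cast; ring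
      rw [he]
      exact h
    set L : (F ⧸ bSub F) →ₗ[ℂ] (F ⧸ bSub F) := ubar - (β - 1 - (k : ℂ)) • LinearMap.id with hL
    have hinj : Function.Injective L := by
      rw [← LinearMap.ker_eq_bot]
      have hker : LinearMap.ker L = Module.End.eigenspace ubar (β - 1 - (k : ℂ)) := by
        ext w
        rw [LinearMap.mem_ker, Module.End.mem_eigenspace_iff]
        simp only [hL, LinearMap.sub_apply, LinearMap.smul_apply, LinearMap.id_apply]
        rw [sub_eq_zero]
      rw [hker]
      by_contra hbot
      exact hne (Module.End.hasEigenvalue_iff.mpr hbot)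
    have hsurj : Function.Surjective L :=
      (LinearMap.injective_iff_surjective_of_finrank_eq_finrank rfl).mp hinj
    obtain ⟨v', hv'⟩ := hsurj vv
    refine ⟨v', ?_⟩
    rw [← hv']
    simp only [hL, LinearMap.sub_apply, LinearMap.smul_apply, LinearMap.id_apply]
  -- the operator T = u - (β - 1)
  set T : F → F := fun x => u x - β • x + x with hT
  have T_add : ∀ x y, T (x + y) = T x + T y := by
    intro x y
    simp only [hT]
    rw [u_add, smul_add]
    abel
  have T_zero : T 0 = 0 := by simp [hT, u_zero]
  have mkT : ∀ x : F, (Submodule.Quotient.mk (T x) : F ⧸ bSub F)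
      = ubar (Submodule.Quotient.mk x) - (β - 1) • Submodule.Quotient.mk x := by
    intro x
    simp only [hT]
    rw [Submodule.Quotient.mk_add, Submodule.Quotient.mk_sub, hmk_csmul, ← hubar,
      show ((β - 1) • (Submodule.Quotient.mk x : F ⧸ bSub F))
        = β • (Submodule.Quotient.mk x : F ⧸ bSub F)
          - (1 : ℂ) • (Submodule.Quotient.mk x : F ⧸ bSub F) from sub_smul β 1 _, one_smul]
    abel
  have T_Xpow : ∀ (k : ℕ) (x : F), T ((PowerSeries.X : PowerSeries ℂ) ^ k • x)
      = (PowerSeries.X : PowerSeries ℂ) ^ k • (T x + (k : ℂ) • x) := by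
    intro k x
    simp only [hT]
    rw [u_Xpow, smul_add, smul_add, smul_sub, csmul_comm', csmul_comm']
    abel
  -- approximation step
  have hstep : ∀ (k : ℕ) (r : F), ∃ ζ r',
      (PowerSeries.X : PowerSeries ℂ) ^ k • r - T ((PowerSeries.X : PowerSeries ℂ) ^ k • ζ)
        = (PowerSeries.X : PowerSeries ℂ) ^ (k + 1) • r' := by
    intro k r
    obtain ⟨v', hv'⟩ := lev k (Submodule.Quotient.mk r)
    obtain ⟨ζ, hζ⟩ := Submodule.Quotient.mk_surjective _ v'
    have hz : (Submodule.Quotient.mk (r - (T ζ + (k : ℂ) • ζ)) : F ⧸ bSub F) = 0 := by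
      rw [Submodule.Quotient.mk_sub, Submodule.Quotient.mk_add, mkT, hmk_csmul, hζ, ← hv',
        show ((β - 1 - (k : ℂ)) • v') = (β - 1) • v' - (k : ℂ) • v' from sub_smul (β - 1) _ _]
      abel
    rw [hmk_eq_zero] at hz
    obtain ⟨s, hs⟩ := hz
    refine ⟨ζ, s, ?_⟩
    rw [T_Xpow, ← smul_sub, ← hs, smul_smul, ← pow_succ]
  -- surjectivity of T by completeness
  have Tsurj : ∀ w : F, ∃ z, T z = w := by
    intro w
    obtain ⟨sq, hsq0, hsqs⟩ : ∃ sq : ℕ → F × F, sq 0 = (0, w) ∧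
        ∀ n, sq (n + 1) = ((sq n).1 + (PowerSeries.X : PowerSeries ℂ) ^ n •
            (hstep n (sq n).2).choose, (hstep n (sq n).2).choose_spec.choose) :=
      ⟨fun n => Nat.rec ((0 : F), w)
        (fun n p => (p.1 + (PowerSeries.X : PowerSeries ℂ) ^ n • (hstep n p.2).choose,
          (hstep n p.2).choose_spec.choose)) n, rfl, fun n => rfl⟩
    have hinv : ∀ n, w - T (sq n).1 = (PowerSeries.X : PowerSeries ℂ) ^ n • (sq n).2 := by
      intro n
      induction n with
      | zero => rw [hsq0]; simp [T_zero]
      | succ n ih =>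
          have hspec := (hstep n (sq n).2).choose_spec.choose_spec
          have hsq1 : (sq (n + 1)).1 = (sq n).1 + (PowerSeries.X : PowerSeries ℂ) ^ n •
              (hstep n (sq n).2).choose := by rw [hsqs n]
          have hsq2 : (sq (n + 1)).2 = (hstep n (sq n).2).choose_spec.choose := by
            rw [hsqs n]
          rw [hsq1, hsq2, T_add, sub_add_eq_sub_sub, ih]
          exact hspec
    have hdiff : ∀ n, ∃ y, (sq (n + 1)).1 - (sq n).1
        = (PowerSeries.X : PowerSeries ℂ) ^ n • y := by
      intro n
      have hsq1 : (sq (n + 1)).1 = (sq n).1 + (PowerSeries.X : PowerSeries ℂ) ^ n •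
          (hstep n (sq n).2).choose := by rw [hsqs n]
      refine ⟨(hstep n (sq n).2).choose, ?_⟩
      rw [hsq1, add_sub_cancel_left]
    obtain ⟨zl, hzl⟩ := complete_limit (fun n => (sq n).1) hdiff
    refine ⟨zl, ?_⟩
    have hall : ∀ n : ℕ, ∃ s, T zl - w = (PowerSeries.X : PowerSeries ℂ) ^ n • s := by
      intro n
      obtain ⟨y, hy⟩ := hzl n
      refine ⟨T y + (n : ℂ) • y - (sq n).2, ?_⟩
      have hzleq : zl = (sq n).1 + (PowerSeries.X : PowerSeries ℂ) ^ n • y := by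
        rw [← hy]; abel
      have hw : w = T (sq n).1 + (PowerSeries.X : PowerSeries ℂ) ^ n • (sq n).2 := by
        rw [← hinv n]; abel
      rw [hzleq, T_add, T_Xpow]
      conv_lhs => rw [hw]
      rw [smul_sub]
      abel
    have hTw : T zl - w = 0 := hausdorff_zero _ hall
    exact sub_eq_zero.mp hTw
  -- the Jordan chain downstairs
  have hroot : (minpoly ℂ ubar).IsRoot β := Module.End.isRoot_of_hasEigenvalue heig
  have hp0 : minpoly ℂ ubar ≠ 0 := minpoly.ne_zero (Algebra.IsIntegral.isIntegral ubar)
  have hd1 : 0 < d := by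
    rw [← hd]
    exact (Polynomial.rootMultiplicity_pos hp0).mpr hroot
  obtain ⟨v, hv0, hv1⟩ := exists_jordan_vector ubar β (by rw [hd]; exact hd1)
  rw [hd] at hv0 hv1
  set Nb : Module.End ℂ (F ⧸ bSub F) := ubar - β • 1 with hNb
  set vbar : ℕ → (F ⧸ bSub F) := fun j => if j = 0 then 0 else (Nb ^ (d - j)) v with hvbar
  have hvbar0 : vbar 0 = 0 := by simp [hvbar]
  have hNpow : ∀ m : ℕ, Nb ((Nb ^ m) v) = (Nb ^ (m + 1)) v := by
    intro m
    rw [← Module.End.mul_apply, ← pow_succ']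
  have hvbarchain : ∀ j, 1 ≤ j → j ≤ d → Nb (vbar j) = vbar (j - 1) := by
    intro j h1 h2
    by_cases hj1 : j = 1
    · subst hj1
      simp only [hvbar, if_neg one_ne_zero, Nat.sub_self, if_pos rfl]
      rw [hNpow]
      have he : d - 1 + 1 = d := by omega
      rw [he, hv0]
    · have hj2 : 2 ≤ j := by omega
      simp only [hvbar, if_neg (by omega : j ≠ 0), if_neg (by omega : j - 1 ≠ 0)]
      rw [hNpow]
      have he : d - j + 1 = d - (j - 1) := by omega
      rw [he]
  set xx : ℕ → F := fun j => if j = 0 then 0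
    else (Submodule.Quotient.mk_surjective (bSub F) (vbar j)).choose with hxx
  have hxx0 : xx 0 = 0 := by simp [hxx]
  have hxxmk : ∀ j, (Submodule.Quotient.mk (xx j) : F ⧸ bSub F) = vbar j := by
    intro j
    by_cases h : j = 0
    · subst h
      simp only [hxx, if_pos rfl, hvbar0]
      exact Submodule.Quotient.mk_zero _
    · simp only [hxx, if_neg h]
      exact (Submodule.Quotient.mk_surjective (bSub F) (vbar j)).choose_spec
  have hy_ex : ∀ j, 1 ≤ j → j ≤ d → ∃ yy,
      (PowerSeries.X : PowerSeries ℂ) • yy = u (xx j) - β • xx j - xx (j - 1) := by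
    intro j h1 h2
    rw [← hmk_eq_zero]
    have hcalc : (Submodule.Quotient.mk (u (xx j) - β • xx j - xx (j - 1)) : F ⧸ bSub F)
        = Nb (vbar j) - vbar (j - 1) := by
      rw [Submodule.Quotient.mk_sub, Submodule.Quotient.mk_sub, hmk_csmul, ← hubar,
        hxxmk, hxxmk]
      simp only [hNb, LinearMap.sub_apply, LinearMap.smul_apply, Module.End.one_apply]
    rw [hcalc, hvbarchain j h1 h2, sub_self]
  set yy : ℕ → F := fun j => if h : 1 ≤ j ∧ j ≤ d then (hy_ex j h.1 h.2).choose else 0 with hyy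
  have hyspec : ∀ j, 1 ≤ j → j ≤ d →
      (PowerSeries.X : PowerSeries ℂ) • yy j = u (xx j) - β • xx j - xx (j - 1) := by
    intro j h1 h2
    simp only [hyy, dif_pos (⟨h1, h2⟩ : 1 ≤ j ∧ j ≤ d)]
    exact (hy_ex j h1 h2).choose_spec
  obtain ⟨zz, hzz0, hzzs⟩ : ∃ zz : ℕ → F, zz 0 = 0 ∧
      ∀ j, T (zz (j + 1)) = zz j - yy (j + 1) :=
    ⟨fun n => Nat.rec 0 (fun j zj => (Tsurj (zj - yy (j + 1))).choose) n, rfl,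
      fun j => (Tsurj _).choose_spec⟩
  refine ⟨fun j => xx j + (PowerSeries.X : PowerSeries ℂ) • zz j, ?_, ?_, ?_⟩
  · simp [hxx0, hzz0]
  · have hmk_e : ∀ j : ℕ,
        (Submodule.Quotient.mk (xx j + (PowerSeries.X : PowerSeries ℂ) • zz j) :
          F ⧸ bSub F) = vbar j := by
      intro j
      rw [Submodule.Quotient.mk_add, hxxmk, hmkX, add_zero]
    have hfam : (fun j : Fin d =>
        (Submodule.Quotient.mk ((fun j => xx j + (PowerSeries.X : PowerSeries ℂ) • zz j)
          (j.1 + 1)) : F ⧸ bSub F))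
        = fun j : Fin d => (Nb ^ (d - 1 - j.1)) v := by
      funext j
      rw [hmk_e]
      simp only [hvbar, if_neg (Nat.succ_ne_zero j.1)]
      have he : d - (j.1 + 1) = d - 1 - j.1 := by omega
      rw [he]
    rw [hfam]
    exact jordan_li Nb d v hv0 hv1
  · intro j hj1 hjd
    obtain ⟨jj, rfl⟩ : ∃ jj, j = jj + 1 := ⟨j - 1, by omega⟩
    simp only [Nat.add_sub_cancel]
    have hTz : T (zz (jj + 1)) = zz jj - yy (jj + 1) := hzzs jj
    have hu_x : u (xx (jj + 1)) = (PowerSeries.X : PowerSeries ℂ) • yy (jj + 1)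
        + β • xx (jj + 1) + xx jj := by
      have hsp := hyspec (jj + 1) (by omega) hjd
      rw [Nat.add_sub_cancel] at hsp
      rw [hsp]
      abel
    have hu_z : u (zz (jj + 1)) = β • zz (jj + 1) - zz (jj + 1) + (zz jj - yy (jj + 1)) := by
      rw [← hTz]
      simp only [hT]
      abel
    have hkey : u (xx (jj + 1) + (PowerSeries.X : PowerSeries ℂ) • zz (jj + 1))
        = β • (xx (jj + 1) + (PowerSeries.X : PowerSeries ℂ) • zz (jj + 1))
          + (xx jj + (PowerSeries.X : PowerSeries ℂ) • zz jj) := by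
      rw [u_add, u_Xsmul, hu_x, hu_z]
      simp only [smul_add, smul_sub, csmul_comm']
      abel
    have hCX : (PowerSeries.X : PowerSeries ℂ) •
        (β • (xx (jj + 1) + (PowerSeries.X : PowerSeries ℂ) • zz (jj + 1)))
        = (PowerSeries.C β * (PowerSeries.X : PowerSeries ℂ)) •
          (xx (jj + 1) + (PowerSeries.X : PowerSeries ℂ) • zz (jj + 1)) := by
      rw [csmul_def', smul_smul, mul_comm]
    rw [← hu, hkey, smul_add, hCX]
end
end

section
/- Let E be a regular (a,b)-module, δ a complex number, and assume there is an isomorphism of (a,b)-modules κ : Ě → Hom_{a,b}(E, E_δ). Let (Ẽ, ι) be a saturation of E. Then the image of the injective morphism of (a,b)-modules Hom_{a,b}(Ẽ, E_δ) → Hom_{a,b}(E, E_δ) given by φ ↦ φ ∘ ι is contained in the image under κ of the biggest simple pole sub-(a,b)-module of Ě. -/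
open PowerSeries

noncomputable section

/-- A linear functional to `ℂ[[b]]` all of whose values are divisible by `X`
is `X` times a linear functional. -/
lemma exists_divX {M : Type*} [AddCommGroup M] [Module (PowerSeries ℂ) M]
    (φ : M →ₗ[PowerSeries ℂ] PowerSeries ℂ)
    (h : ∀ x, ∃ g, φ x = (PowerSeries.X : PowerSeries ℂ) * g) :
    ∃ ψ : M →ₗ[PowerSeries ℂ] PowerSeries ℂ, φ = (PowerSeries.X : PowerSeries ℂ) • ψ := by
  classical
  have hX : (PowerSeries.X : PowerSeries ℂ) ≠ 0 := PowerSeries.X_ne_zero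
  choose g hg using h
  refine ⟨{ toFun := g, map_add' := ?_, map_smul' := ?_ }, ?_⟩
  · intro x y
    apply mul_left_cancel₀ hX
    calc (PowerSeries.X : PowerSeries ℂ) * g (x + y)
        = φ (x + y) := (hg _).symm
      _ = φ x + φ y := map_add φ x y
      _ = PowerSeries.X * (g x + g y) := by rw [hg x, hg y]; ring
  · intro S x
    apply mul_left_cancel₀ hX
    simp only [RingHom.id_apply, smul_eq_mul]
    calc (PowerSeries.X : PowerSeries ℂ) * g (S • x)
        = φ (S • x) := (hg _).symm
      _ = S * φ x := by rw [map_smul, smul_eq_mul]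
      _ = PowerSeries.X * (S * g x) := by rw [hg x]; ring
  · apply LinearMap.ext; intro x
    simp only [LinearMap.smul_apply, LinearMap.coe_mk, AddHom.coe_mk, smul_eq_mul]
    exact hg x

theorem stmt11 (E : Type) [AddCommGroup E] [Module (PowerSeries ℂ) E]
    [Module.Free (PowerSeries ℂ) E] [Module.Finite (PowerSeries ℂ) E]
    (aE : E → E) (hE : IsAB aE) (hreg : IsABRegular aE) (δ : ℂ)
    (κ : Chk E ≃ₗ[PowerSeries ℂ] (E →ₗ[PowerSeries ℂ] PowerSeries ℂ))
    (hκ : ∀ x : Chk E, κ (chkA aE x) = aHom aE (aDelta δ) hE (isAB_aDelta δ) (κ x))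
    (Et : Type) [AddCommGroup Et] [Module (PowerSeries ℂ) Et]
    [Module.Free (PowerSeries ℂ) Et] [Module.Finite (PowerSeries ℂ) Et]
    (aEt : Et → Et) (hEt : IsAB aEt)
    (ι : E →ₗ[PowerSeries ℂ] Et) (hsat : IsSaturation aE aEt ι)
    (Fc : Submodule (PowerSeries ℂ) (Chk E)) (hFc : IsBiggestSP (chkA aE) Fc) :
    ∀ φ : Et →ₗ[PowerSeries ℂ] PowerSeries ℂ, ∃ y ∈ Fc, κ y = φ ∘ₗ ι := by
  classical
  obtain ⟨hinj, hcomm, hsp, -, -⟩ := hsat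
  -- the submodule of Hom(E, R) consisting of maps factoring through ι
  set H : Submodule (PowerSeries ℂ) (E →ₗ[PowerSeries ℂ] PowerSeries ℂ) :=
    LinearMap.range (LinearMap.lcomp (PowerSeries ℂ) (PowerSeries ℂ) ι) with hH
  have memH : ∀ f : E →ₗ[PowerSeries ℂ] PowerSeries ℂ,
      f ∈ H ↔ ∃ φ : Et →ₗ[PowerSeries ℂ] PowerSeries ℂ, f = φ ∘ₗ ι := by
    intro f
    constructor
    · rintro ⟨φ, rfl⟩; exact ⟨φ, rfl⟩
    · rintro ⟨φ, rfl⟩; exact ⟨φ, rfl⟩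
  set G : Submodule (PowerSeries ℂ) (Chk E) :=
    H.comap (κ : Chk E →ₗ[PowerSeries ℂ] (E →ₗ[PowerSeries ℂ] PowerSeries ℂ)) with hGdef
  have memG : ∀ y : Chk E,
      y ∈ G ↔ ∃ φ : Et →ₗ[PowerSeries ℂ] PowerSeries ℂ, κ y = φ ∘ₗ ι := by
    intro y; exact memH (κ y)
  -- aHom of a map factoring through ι also factors through ι
  have keyA : ∀ φ : Et →ₗ[PowerSeries ℂ] PowerSeries ℂ,
      aHom aE (aDelta δ) hE (isAB_aDelta δ) (φ ∘ₗ ι)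
        = (aHom aEt (aDelta δ) hEt (isAB_aDelta δ) φ) ∘ₗ ι := by
    intro φ; ext x
    simp only [aHom_apply, LinearMap.comp_apply, hcomm]
  -- aHom of any φ : Et →ₗ R is divisible by X (simple pole)
  have keyB : ∀ φ : Et →ₗ[PowerSeries ℂ] PowerSeries ℂ,
      ∃ ψ : Et →ₗ[PowerSeries ℂ] PowerSeries ℂ,
        aHom aEt (aDelta δ) hEt (isAB_aDelta δ) φ = (PowerSeries.X : PowerSeries ℂ) • ψ := by
    intro φ
    apply exists_divX
    intro x
    obtain ⟨y, hy⟩ := hsp x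
    refine ⟨PowerSeries.C δ * φ x + PowerSeries.X * PowerSeries.derivative ℂ (φ x) - φ y, ?_⟩
    simp only [aHom_apply, aDelta, hy, map_smul, smul_eq_mul]
    ring
  -- G is a sub-(a,b)-module of Ě
  have hGsub : IsSubAB (chkA aE) G := by
    intro y hy
    obtain ⟨φ, hφ⟩ := (memG y).1 hy
    refine (memG _).2 ⟨aHom aEt (aDelta δ) hEt (isAB_aDelta δ) φ, ?_⟩
    rw [hκ, hφ, keyA]
  -- G has a simple pole
  have hGsp : SPOn (chkA aE) G := by
    intro y hy
    obtain ⟨φ, hφ⟩ := (memG y).1 hy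
    obtain ⟨ψ, hψ⟩ := keyB φ
    refine ⟨κ.symm (ψ ∘ₗ ι), (memG _).2 ⟨ψ, by simp⟩, ?_⟩
    apply κ.injective
    rw [map_smul, LinearEquiv.apply_symm_apply, hκ, hφ, keyA, hψ]
    ext x
    simp only [LinearMap.comp_apply, LinearMap.smul_apply]
  -- conclude by maximality of Fc
  intro φ
  refine ⟨κ.symm (φ ∘ₗ ι), ?_, by simp⟩
  exact hFc.2.2 G hGsub hGsp ((memG _).2 ⟨φ, by simp⟩)
end
end
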